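/- arXiv:1106.2010 — 6 statements merged into one kernel-verified Lean document; each statement's English description precedes it below -/
import Mathlib

section
/- Contraction principle of Kahane (finite sign-sum form): Let X be a complex Banach space, p ∈ [1,∞), N ∈ ℕ, x_1,…,x_N ∈ X, and a_1,…,a_N, b_1,…,b_N ∈ ℂ with |a_j| ≤ |b_j| for j = 1,…,N. Then Σ_{ε ∈ {−1,1}^N} ‖Σ_{j=1}^N a_j ε_j x_j‖^p ≤ 2^p · Σ_{ε ∈ {−1,1}^N} ‖Σ_{j=1}^N b_j ε_j x_j‖^p. -/
/-!
For real coefficients `|t j| ≤ 1` the contraction holds with constant `1`: the sign sum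
`t ↦ ∑ ε, ‖∑ j, (t j * ε j) • y j‖ ^ p` is convex in `t` and does not change when one coordinate
of `t` changes sign, so pushing the coordinates one at a time to the endpoint `1` of `[-1, 1]`
can only increase it. For complex coefficients write `a j = c j * b j` with `‖c j‖ ≤ 1`; splitting
`c j` into real and imaginary parts and using `(A + B) ^ p ≤ 2 ^ (p - 1) * (A ^ p + B ^ p)`
costs the factor `2 ^ p`.
-/

open Finset Function

section Real

variable {ι E : Type*} [Fintype ι] [DecidableEq ι] [NormedAddCommGroup E] [NormedSpace ℝ E]

lemma convexOn_norm_rpow {p : ℝ} (hp : 1 ≤ p) : ConvexOn ℝ Set.univ fun x : E ↦ ‖x‖ ^ p := by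
  refine ⟨convex_univ, fun x _ y _ a b ha hb hab ↦ ?_⟩
  calc ‖a • x + b • y‖ ^ p ≤ (a • ‖x‖ + b • ‖y‖) ^ p := by
        gcongr
        simpa [norm_smul, abs_of_nonneg ha, abs_of_nonneg hb] using norm_add_le (a • x) (b • y)
    _ ≤ a • ‖x‖ ^ p + b • ‖y‖ ^ p :=
        (convexOn_rpow hp).2 (norm_nonneg x) (norm_nonneg y) ha hb hab

/-- `2 ^ card ι` times `𝔼 ‖∑ j, ε j * t j • y j‖ ^ p` for independent uniform signs `ε j`. -/
noncomputable def rademacherMoment (p : ℝ) (y : ι → E) (t : ι → ℝ) : ℝ :=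
  ∑ ε : ι → Bool, ‖∑ j, (t j * if ε j then 1 else -1) • y j‖ ^ p

lemma convexOn_rademacherMoment {p : ℝ} (hp : 1 ≤ p) (y : ι → E) :
    ConvexOn ℝ Set.univ (rademacherMoment p y) := by
  refine ⟨convex_univ, fun t _ t' _ a b ha hb hab ↦ ?_⟩
  simp only [rademacherMoment, smul_eq_mul, mul_sum, ← sum_add_distrib]
  refine sum_le_sum fun ε _ ↦ ?_
  have hlin : ∑ j, ((a • t + b • t') j * if ε j then 1 else -1) • y j =
      a • ∑ j, (t j * if ε j then 1 else -1) • y j +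
        b • ∑ j, (t' j * if ε j then 1 else -1) • y j := by
    simp only [smul_sum, ← sum_add_distrib, smul_smul, ← add_smul, Pi.add_apply, Pi.smul_apply,
      smul_eq_mul]
    congr! 2
    ring
  rw [hlin]
  exact (convexOn_norm_rpow hp).2 trivial trivial ha hb hab

lemma rademacherMoment_update_neg (p : ℝ) (y : ι → E) (t : ι → ℝ) (k : ι) (r : ℝ) :
    rademacherMoment p y (update t k (-r)) = rademacherMoment p y (update t k r) := by
  have hflip : Involutive fun ε : ι → Bool ↦ update ε k (!ε k) := fun ε ↦ by
    ext j; by_cases h : j = k <;> simp [h]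
  refine Fintype.sum_equiv hflip.toPerm _ _ fun ε ↦ ?_
  congr 2
  refine sum_congr rfl fun j _ ↦ ?_
  by_cases h : j = k
  · subst h; cases hε : ε j <;> simp [hε]
  · simp [h]

lemma rademacherMoment_update_le {p : ℝ} (hp : 1 ≤ p) (y : ι → E) (t : ι → ℝ) (k : ι) {r : ℝ}
    (hr : |r| ≤ 1) :
    rademacherMoment p y (update t k r) ≤ rademacherMoment p y (update t k 1) := by
  have hseg : update t k r ∈ segment ℝ (update t k (-1)) (update t k 1) := by
    obtain ⟨hr₁, hr₂⟩ := abs_le.mp hr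
    refine ⟨(1 - r) / 2, (1 + r) / 2, by linarith, by linarith, by ring, ?_⟩
    ext j
    by_cases h : j = k
    · subst h; simp only [Pi.add_apply, Pi.smul_apply, update_self, smul_eq_mul]; ring
    · simp only [Pi.add_apply, Pi.smul_apply, update_of_ne h, smul_eq_mul]; ring
  calc rademacherMoment p y (update t k r)
      ≤ max (rademacherMoment p y (update t k (-1))) (rademacherMoment p y (update t k 1)) :=
        (convexOn_rademacherMoment hp y).le_on_segment trivial trivial hseg
    _ = rademacherMoment p y (update t k 1) := by rw [rademacherMoment_update_neg, max_self]

lemma rademacherMoment_le_of_abs_le_one {p : ℝ} (hp : 1 ≤ p) (y : ι → E) {t : ι → ℝ}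
    (ht : ∀ j, |t j| ≤ 1) : rademacherMoment p y t ≤ rademacherMoment p y 1 := by
  suffices ∀ s : Finset ι, rademacherMoment p y (s.piecewise t 1) ≤ rademacherMoment p y 1 by
    simpa using this univ
  intro s
  induction s using Finset.induction_on with
  | empty => simp
  | insert k s hk ih =>
    rw [piecewise_insert]
    calc _ ≤ rademacherMoment p y (update (s.piecewise t 1) k 1) :=
          rademacherMoment_update_le hp y _ k (ht k)
      _ = rademacherMoment p y (s.piecewise t 1) := by
          congr 1
          exact update_eq_self_iff.mpr (piecewise_eq_of_notMem s t 1 hk).symm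
      _ ≤ rademacherMoment p y 1 := ih

end Real

lemma Real.rpow_add_le_mul_rpow_add_rpow {p : ℝ} (hp : 1 ≤ p) {a b : ℝ} (ha : 0 ≤ a)
    (hb : 0 ≤ b) : (a + b) ^ p ≤ 2 ^ (p - 1) * (a ^ p + b ^ p) := by
  lift a to NNReal using ha
  lift b to NNReal using hb
  exact_mod_cast NNReal.rpow_add_le_mul_rpow_add_rpow a b hp

section Complex

variable {ι X : Type*} [Fintype ι] [DecidableEq ι] [NormedAddCommGroup X] [NormedSpace ℂ X]

lemma rademacherMoment_one (p : ℝ) (y : ι → X) :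
    rademacherMoment p y 1 =
      ∑ ε : ι → Bool, ‖∑ j, (if ε j then (1 : ℂ) else -1) • y j‖ ^ p := by
  unfold rademacherMoment
  congr! 4 with ε - j -
  split_ifs <;> simp

lemma sum_norm_rpow_le_of_norm_le_one {p : ℝ} (hp : 1 ≤ p) (y : ι → X) {c : ι → ℂ}
    (hc : ∀ j, ‖c j‖ ≤ 1) :
    ∑ ε : ι → Bool, ‖∑ j, (c j * (if ε j then (1 : ℂ) else -1)) • y j‖ ^ p ≤
      2 ^ p * ∑ ε : ι → Bool, ‖∑ j, (if ε j then (1 : ℂ) else -1) • y j‖ ^ p := by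
  set re : ι → ℝ := fun j ↦ (c j).re
  set im : ι → ℝ := fun j ↦ (c j).im
  have hsplit : ∀ ε : ι → Bool, ∑ j, (c j * (if ε j then (1 : ℂ) else -1)) • y j =
      ∑ j, (re j * if ε j then 1 else -1) • y j +
        Complex.I • ∑ j, (im j * if ε j then 1 else -1) • y j := by
    intro ε
    simp only [smul_sum, ← sum_add_distrib, ← Complex.coe_smul, smul_smul, ← add_smul]
    congr! 2 with j
    simp only [re, im]
    conv_lhs => rw [← Complex.re_add_im (c j)]
    split_ifs <;> push_cast <;> ring
  have hpoint : ∀ ε : ι → Bool, ‖∑ j, (c j * (if ε j then (1 : ℂ) else -1)) • y j‖ ^ p ≤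
      2 ^ (p - 1) * (‖∑ j, (re j * if ε j then 1 else -1) • y j‖ ^ p +
        ‖∑ j, (im j * if ε j then 1 else -1) • y j‖ ^ p) := by
    intro ε
    refine le_trans ?_ (Real.rpow_add_le_mul_rpow_add_rpow hp (norm_nonneg _) (norm_nonneg _))
    gcongr
    rw [hsplit]
    exact (norm_add_le _ _).trans_eq (by rw [norm_smul, Complex.norm_I, one_mul])
  have hre := rademacherMoment_le_of_abs_le_one hp y fun j ↦
    (Complex.abs_re_le_norm (c j)).trans (hc j)
  have him := rademacherMoment_le_of_abs_le_one hp y fun j ↦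
    (Complex.abs_im_le_norm (c j)).trans (hc j)
  calc _ ≤ 2 ^ (p - 1) * (rademacherMoment p y re + rademacherMoment p y im) := by
        rw [rademacherMoment, rademacherMoment, ← sum_add_distrib, mul_sum]
        exact sum_le_sum fun ε _ ↦ hpoint ε
    _ ≤ 2 ^ (p - 1) * (2 * rademacherMoment p y 1) := by gcongr; linarith
    _ = 2 ^ p * rademacherMoment p y 1 := by
        rw [← mul_assoc, ← Real.rpow_add_one two_ne_zero, sub_add_cancel]
    _ = _ := by rw [rademacherMoment_one]

end Complex

theorem kahane_contraction_general {X : Type*} [NormedAddCommGroup X] [NormedSpace ℂ X]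
    (p : ℝ) (hp : 1 ≤ p) (N : ℕ) (x : Fin N → X) (a b : Fin N → ℂ)
    (hab : ∀ j, ‖a j‖ ≤ ‖b j‖) :
    ∑ ε : Fin N → Bool, ‖∑ j, (a j * (if ε j then (1 : ℂ) else -1)) • x j‖ ^ p ≤
      2 ^ p * ∑ ε : Fin N → Bool, ‖∑ j, (b j * (if ε j then (1 : ℂ) else -1)) • x j‖ ^ p := by
  have hquot : ∀ j, a j = a j / b j * b j := fun j ↦ by
    by_cases hb : b j = 0
    · simpa [hb] using hab j
    · rw [div_mul_cancel₀ _ hb]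
  have hc : ∀ j, ‖a j / b j‖ ≤ 1 := fun j ↦ by
    rw [norm_div]; exact div_le_one_of_le₀ (hab j) (norm_nonneg _)
  have hscale : ∀ (c : Fin N → ℂ) (ε : Fin N → Bool),
      ∑ j, (c j * (if ε j then (1 : ℂ) else -1)) • (b j • x j) =
        ∑ j, (c j * b j * (if ε j then (1 : ℂ) else -1)) • x j := fun c ε ↦
    sum_congr rfl fun j _ ↦ by rw [smul_smul, mul_right_comm]
  calc _ = ∑ ε : Fin N → Bool,
        ‖∑ j, (a j / b j * (if ε j then (1 : ℂ) else -1)) • (b j • x j)‖ ^ p := by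
        simp only [hscale, ← hquot]
    _ ≤ _ := sum_norm_rpow_le_of_norm_le_one hp (fun j ↦ b j • x j) hc
    _ = _ := by simp only [smul_smul, mul_comm]

/-- Contraction principle of Kahane (finite sign-sum form). -/
theorem kahane_contraction {X : Type*} [NormedAddCommGroup X] [NormedSpace ℂ X]
    [CompleteSpace X] (p : ℝ) (hp : 1 ≤ p) (N : ℕ) (x : Fin N → X) (a b : Fin N → ℂ)
    (hab : ∀ j, ‖a j‖ ≤ ‖b j‖) :
    ∑ ε : Fin N → Bool, ‖∑ j, (a j * (if ε j then (1 : ℂ) else -1)) • x j‖ ^ p ≤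
      2 ^ p * ∑ ε : Fin N → Bool, ‖∑ j, (b j * (if ε j then (1 : ℂ) else -1)) • x j‖ ^ p :=
  kahane_contraction_general p hp N x a b hab
end

section
/- Difference formula for inverses (Lemma on differences, part b): For α ∈ ℕ₀ⁿ \ {0}, let 𝒵_α denote the set of all ordered decompositions 𝒲 = (ω^1,…,ω^r) of α, i.e., 1 ≤ r ≤ |α|, each ω^j is a nonzero multi-index with ω^j ≤ α, and ω^1 + ⋯ + ω^r = α; for 𝒲 ∈ 𝒵_α set ω*_j := Σ_{l = j+1}^{r} ω^l. Then there exist integers c_𝒲, indexed by 𝒲 ∈ 𝒵_α and depending only on α and 𝒲, such that for every complex Banach space X, every sequence S : ℤⁿ → L(X) of pairwise commuting bounded linear operators with each S(k) invertible with bounded inverse, and every k ∈ ℤⁿ, Δ^α(S⁻¹)(k) = Σ_{𝒲 ∈ 𝒵_α} c_𝒲 · S(k − α)⁻¹ ∘ Π_{j=1}^{r_𝒲} [ (Δ^{ω^j}S)(k − ω*_j) ∘ S(k − ω*_j)⁻¹ ], the product being taken in the indicated order. -/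
open scoped BigOperators

universe u

/-- One-step discrete difference in direction `j`: `Δ_j M (k) = M k - M (k - e_j)`. -/
def discDiff {n : ℕ} {V : Type*} [AddCommGroup V] (j : Fin n) :
    ((Fin n → ℤ) → V) → ((Fin n → ℤ) → V) :=
  fun M k => M k - M (k - Pi.single j 1)

/-- Iterated discrete difference `Δ^γ = Δ_1^{γ_1} ∘ ⋯ ∘ Δ_n^{γ_n}` for a multi-index `γ`. -/
def discDiffMulti {n : ℕ} {V : Type*} [AddCommGroup V] (γ : Fin n → ℕ) :
    ((Fin n → ℤ) → V) → ((Fin n → ℤ) → V) :=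
  (List.finRange n).foldr (fun j F => (discDiff j)^[γ j] ∘ F) id

/-!
Write `T_𝒲(k) = S(k - α)⁻¹ Π_j [(Δ^{ω^j} S)(k - ω*_j) S(k - ω*_j)⁻¹]` for the term of a
decomposition `𝒲` of `α`. By the product rule and `Δ_i(S⁻¹)(k) = -S(k - e_i)⁻¹ (Δ_i S)(k) S(k)⁻¹`,
the difference `Δ_i T_𝒲` is the sum of the `T_𝒲'` over the decompositions `𝒲'` of `α + e_i`
obtained by adding `e_i` to one part of `𝒲`, minus the sum over those obtained by inserting
`e_i` as a new part. Induction on `α`, starting from `T_[] = S⁻¹`, therefore writes `Δ^α(S⁻¹)`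
as an integer combination of the `T_𝒲` with coefficients that depend only on `α` and `𝒲`.
-/

section

variable {n : ℕ}

section Difference

variable {V : Type*} [AddCommGroup V]

theorem discDiff_comm (i j : Fin n) : Function.Commute (discDiff (V := V) i) (discDiff j) := by
  intro M
  funext k
  simp only [discDiff, sub_right_comm k (Pi.single i 1)]
  abel

theorem foldr_discDiff_iterate_add_single (γ : Fin n → ℕ) (i : Fin n) (L : List (Fin n)) :
    L.foldr (fun j F => (discDiff (V := V) j)^[(γ + Pi.single i 1 : Fin n → ℕ) j] ∘ F) id =
      (discDiff i)^[L.count i] ∘ L.foldr (fun j F => (discDiff j)^[γ j] ∘ F) id := by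
  induction L with
  | nil => rfl
  | cons a L ih =>
    rw [List.foldr_cons, List.foldr_cons, ih, Pi.add_apply, ← Function.comp_assoc,
      ← Function.comp_assoc]
    rcases eq_or_ne a i with rfl | hai
    · rw [Pi.single_eq_same, List.count_cons_self, ← Function.iterate_add,
        ← Function.iterate_add]
      congr 2
      omega
    · rw [Pi.single_eq_of_ne hai, add_zero, List.count_cons_of_ne hai,
        ((discDiff_comm a i).iterate_iterate (γ a) (L.count i)).comp_eq]

theorem discDiffMulti_add_single (γ : Fin n → ℕ) (i : Fin n) (M : (Fin n → ℤ) → V) :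
    discDiffMulti (γ + Pi.single i 1) M = discDiff i (discDiffMulti γ M) := by
  simp only [discDiffMulti, foldr_discDiff_iterate_add_single, List.count_finRange,
    Function.iterate_one, Function.comp_apply]

@[simp]
theorem discDiffMulti_zero (M : (Fin n → ℤ) → V) : discDiffMulti (0 : Fin n → ℕ) M = M := by
  unfold discDiffMulti
  induction List.finRange n <;> simp_all

@[simp]
theorem discDiffMulti_single (i : Fin n) (M : (Fin n → ℤ) → V) :
    discDiffMulti (Pi.single i 1) M = discDiff i M := by
  simpa using discDiffMulti_add_single 0 i M

theorem discDiff_comp_sub (i : Fin n) (F : (Fin n → ℤ) → V) (v k : Fin n → ℤ) :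
    discDiff i (fun k => F (k - v)) k = discDiff i F (k - v) := by
  simp only [discDiff, sub_right_comm]

theorem discDiff_linearCombination {ι : Type*} (i : Fin n) (F : ι → (Fin n → ℤ) → V)
    (c : ι →₀ ℤ) (k : Fin n → ℤ) :
    discDiff i (fun k => Finsupp.linearCombination ℤ (F · k) c) k =
      Finsupp.linearCombination ℤ (fun W => discDiff i (F W) k) c := by
  simp [discDiff, Finsupp.linearCombination_apply, Finsupp.sum, smul_sub]

end Difference

section Ring

variable {A : Type*} [Ring A]

theorem discDiff_mul (i : Fin n) (F G : (Fin n → ℤ) → A) (k : Fin n → ℤ) :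
    discDiff i (F * G) k = discDiff i F k * G k + F (k - Pi.single i 1) * discDiff i G k := by
  simp only [discDiff, Pi.mul_apply]
  noncomm_ring

theorem discDiff_of_mul_eq_one {S Sinv : (Fin n → ℤ) → A} (hS : ∀ k, S k * Sinv k = 1)
    (hSinv : ∀ k, Sinv k * S k = 1) (i : Fin n) (k : Fin n → ℤ) :
    discDiff i Sinv k = -(Sinv (k - Pi.single i 1) * discDiff i S k * Sinv k) := by
  simp only [discDiff, mul_sub, sub_mul, mul_assoc, hS, hSinv, one_mul, mul_one, neg_sub]

end Ring

abbrev multiIndexCast : (Fin n → ℕ) →+ (Fin n → ℤ) := (Nat.castAddMonoidHom ℤ).compLeft (Fin n)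

@[simp]
theorem multiIndexCast_single (i : Fin n) :
    multiIndexCast (Pi.single i 1) = Pi.single i (1 : ℤ) := by
  ext j
  by_cases h : j = i <;> simp [h]

def bumps (i : Fin n) : List (Fin n → ℕ) → List (List (Fin n → ℕ))
  | [] => []
  | ω :: W => ((ω + Pi.single i 1) :: W) :: (bumps i W).map (ω :: ·)

def inserts (i : Fin n) : List (Fin n → ℕ) → List (List (Fin n → ℕ))
  | [] => [[Pi.single i 1]]
  | ω :: W => (Pi.single i 1 :: ω :: W) :: (inserts i W).map (ω :: ·)

theorem sum_of_mem_bumps {i : Fin n} {W L : List (Fin n → ℕ)} (hL : L ∈ bumps i W) :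
    L.sum = W.sum + Pi.single i 1 := by
  induction W generalizing L with
  | nil => simp [bumps] at hL
  | cons ω W ih =>
    simp only [bumps, List.mem_cons, List.mem_map] at hL
    rcases hL with rfl | ⟨L, hL, rfl⟩
    · simp only [List.sum_cons]; abel
    · simp only [List.sum_cons, ih hL, add_assoc]

theorem sum_of_mem_inserts {i : Fin n} {W L : List (Fin n → ℕ)} (hL : L ∈ inserts i W) :
    L.sum = W.sum + Pi.single i 1 := by
  induction W generalizing L with
  | nil => simp_all [inserts]
  | cons ω W ih =>
    simp only [inserts, List.mem_cons, List.mem_map] at hL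
    rcases hL with rfl | ⟨L, hL, rfl⟩
    · simp only [List.sum_cons]; abel
    · simp only [List.sum_cons, ih hL, add_assoc]

section InvTerm

variable {A : Type*} [Ring A] (S Sinv : (Fin n → ℤ) → A)

-- The term `T_𝒲` of the formula, regrouped so that it is built one part at a time
-- (see `invTerm_eq_mul_prod`).
def invTerm : List (Fin n → ℕ) → (Fin n → ℤ) → A
  | [] => Sinv
  | ω :: W => (fun k => Sinv (k - multiIndexCast (ω + W.sum)) *
      discDiffMulti ω S (k - multiIndexCast W.sum)) * invTerm W

theorem invTerm_cons_apply (ω : Fin n → ℕ) (W : List (Fin n → ℕ)) (k : Fin n → ℤ) :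
    invTerm S Sinv (ω :: W) k = Sinv (k - multiIndexCast (ω + W.sum)) *
      discDiffMulti ω S (k - multiIndexCast W.sum) * invTerm S Sinv W k :=
  rfl

variable {S Sinv}

theorem discDiff_invTerm (hS : ∀ k, S k * Sinv k = 1) (hSinv : ∀ k, Sinv k * S k = 1)
    (i : Fin n) (W : List (Fin n → ℕ)) (k : Fin n → ℤ) :
    discDiff i (invTerm S Sinv W) k =
      ((bumps i W).map (invTerm S Sinv · k)).sum -
        ((inserts i W).map (invTerm S Sinv · k)).sum := by
  induction W with
  | nil => simp [bumps, inserts, invTerm, discDiff_of_mul_eq_one hS hSinv]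
  | cons ω W ih =>
    set g : (Fin n → ℤ) → A := fun k =>
      Sinv (k - multiIndexCast (ω + W.sum)) * discDiffMulti ω S (k - multiIndexCast W.sum)
    have hhead : discDiff i g k * invTerm S Sinv W k =
        invTerm S Sinv ((ω + Pi.single i 1) :: W) k -
          invTerm S Sinv (Pi.single i 1 :: ω :: W) k := by
      have hshift : k - multiIndexCast (ω + Pi.single i 1 + W.sum) =
          k - Pi.single i 1 - multiIndexCast (ω + W.sum) := by
        simp only [map_add, multiIndexCast_single]; abel
      have hshift' : k - multiIndexCast (Pi.single i 1 + (ω :: W).sum) =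
          k - multiIndexCast (ω + W.sum) - Pi.single i 1 := by
        simp only [List.sum_cons, map_add, multiIndexCast_single]; abel
      rw [show g = (fun k => Sinv (k - multiIndexCast (ω + W.sum))) *
          fun k => discDiffMulti ω S (k - multiIndexCast W.sum) from rfl,
        discDiff_mul, discDiff_comp_sub, discDiff_comp_sub, ← discDiffMulti_add_single,
        discDiff_of_mul_eq_one hS hSinv, invTerm_cons_apply, invTerm_cons_apply,
        invTerm_cons_apply, hshift, hshift', discDiffMulti_single, List.sum_cons]
      noncomm_ring
    have htail : ∀ L ∈ bumps i W ++ inserts i W,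
        g (k - Pi.single i 1) * invTerm S Sinv L k = invTerm S Sinv (ω :: L) k := by
      intro L hL
      have hsum : L.sum = W.sum + Pi.single i 1 := by
        rcases List.mem_append.1 hL with hL | hL
        exacts [sum_of_mem_bumps hL, sum_of_mem_inserts hL]
      simp only [g, invTerm_cons_apply, hsum, ← add_assoc, map_add, multiIndexCast_single,
        sub_sub]
      abel_nf
    rw [show invTerm S Sinv (ω :: W) = g * invTerm S Sinv W from rfl, discDiff_mul, ih, hhead,
      mul_sub, ← List.sum_map_mul_left, ← List.sum_map_mul_left,
      List.map_congr_left fun L hL => htail L (List.mem_append_left _ hL),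
      List.map_congr_left fun L hL => htail L (List.mem_append_right _ hL)]
    simp only [bumps, inserts, List.map_cons, List.map_map, List.sum_cons, Function.comp_def]
    abel

end InvTerm

def IsDecomposition (α : Fin n → ℕ) (W : List (Fin n → ℕ)) : Prop :=
  0 ∉ W ∧ W.sum = α

theorem length_le_sum_of_zero_notMem {W : List (Fin n → ℕ)} (hW : 0 ∉ W) :
    W.length ≤ ∑ i, W.sum i := by
  induction W with
  | nil => simp
  | cons ω W ih =>
    rw [List.mem_cons, not_or] at hW
    have hω : ∑ i, ω i ≠ 0 := fun h =>
      hW.1 (funext fun i => (Finset.sum_eq_zero_iff.1 h i (Finset.mem_univ i)).symm)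
    simp only [List.length_cons, List.sum_cons, Pi.add_apply, Finset.sum_add_distrib]
    have := ih hW.2
    omega

theorem isDecomposition_iff {α : Fin n → ℕ} (hα : α ≠ 0) {W : List (Fin n → ℕ)} :
    IsDecomposition α W ↔ 1 ≤ W.length ∧ W.length ≤ ∑ i, α i ∧
      (∀ ω ∈ W, ω ≠ 0 ∧ ω ≤ α) ∧ W.sum = α := by
  constructor
  · rintro ⟨hW, rfl⟩
    refine ⟨List.length_pos_iff.2 fun h => hα (by simp [h]), length_le_sum_of_zero_notMem hW,
      fun ω hω => ⟨fun h => hW (h ▸ hω), List.le_sum_of_mem hω⟩, rfl⟩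
  · rintro ⟨-, -, hW, hsum⟩
    exact ⟨fun h => (hW 0 h).1 rfl, hsum⟩

theorem setOf_isDecomposition_finite (α : Fin n → ℕ) : {W | IsDecomposition α W}.Finite := by
  refine ((List.finite_length_le (Set.Iic α) (∑ i, α i)).image (List.map Subtype.val)).subset ?_
  rintro W ⟨hW, hsum⟩
  lift W to List (Set.Iic α) using fun ω hω => hsum ▸ List.le_sum_of_mem hω
  have hlen := length_le_sum_of_zero_notMem hW
  rw [hsum, List.length_map] at hlen
  exact ⟨W, hlen, rfl⟩

theorem zero_notMem_of_mem_bumps {i : Fin n} {W L : List (Fin n → ℕ)} (hW : 0 ∉ W)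
    (hL : L ∈ bumps i W) : 0 ∉ L := by
  induction W generalizing L with
  | nil => simp [bumps] at hL
  | cons ω W ih =>
    rw [List.mem_cons, not_or] at hW
    simp only [bumps, List.mem_cons, List.mem_map] at hL
    rcases hL with rfl | ⟨L, hL, rfl⟩
    · simp [hW.2, eq_comm (a := (0 : Fin n → ℕ)), Pi.single_eq_zero_iff]
    · simpa [hW.1] using ih hW.2 hL

theorem zero_notMem_of_mem_inserts {i : Fin n} {W L : List (Fin n → ℕ)} (hW : 0 ∉ W)
    (hL : L ∈ inserts i W) : 0 ∉ L := by
  induction W generalizing L with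
  | nil => simp_all [inserts, eq_comm (a := (0 : Fin n → ℕ))]
  | cons ω W ih =>
    rw [List.mem_cons, not_or] at hW
    simp only [inserts, List.mem_cons, List.mem_map] at hL
    rcases hL with rfl | ⟨L, hL, rfl⟩
    · simp [hW, eq_comm (a := (0 : Fin n → ℕ))]
    · simpa [hW.1] using ih hW.2 hL

noncomputable def formalDiff (i : Fin n) (W : List (Fin n → ℕ)) : List (Fin n → ℕ) →₀ ℤ :=
  ((bumps i W).map (Finsupp.single · 1)).sum - ((inserts i W).map (Finsupp.single · 1)).sum

theorem linearCombination_formalDiff {M : Type*} [AddCommGroup M] (v : List (Fin n → ℕ) → M)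
    (i : Fin n) (W : List (Fin n → ℕ)) :
    Finsupp.linearCombination ℤ v (formalDiff i W) =
      ((bumps i W).map v).sum - ((inserts i W).map v).sum := by
  simp [formalDiff, map_list_sum, List.map_map, Function.comp_def]

theorem formalDiff_mem_supported {β : Fin n → ℕ} {W : List (Fin n → ℕ)}
    (hW : IsDecomposition β W) (i : Fin n) :
    formalDiff i W ∈ Finsupp.supported ℤ ℤ {L | IsDecomposition (β + Pi.single i 1) L} := by
  obtain ⟨hW, rfl⟩ := hW
  refine Submodule.sub_mem _ (list_sum_mem ?_) (list_sum_mem ?_) <;>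
    simp only [List.mem_map] <;> rintro _ ⟨L, hL, rfl⟩ <;>
    refine Finsupp.single_mem_supported ℤ _ ⟨?_, ?_⟩
  exacts [zero_notMem_of_mem_bumps hW hL, sum_of_mem_bumps hL,
    zero_notMem_of_mem_inserts hW hL, sum_of_mem_inserts hL]

@[elab_as_elim]
theorem multiIndex_induction {P : (Fin n → ℕ) → Prop} (zero : P 0)
    (add_single : ∀ β i, P β → P (β + Pi.single i 1)) (α : Fin n → ℕ) : P α := by
  refine WellFoundedLT.induction α fun α ih => ?_
  rcases eq_or_ne α 0 with rfl | hα
  · exact zero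
  obtain ⟨i, hi⟩ := Function.ne_iff.1 hα
  have hle : Pi.single i 1 ≤ α := fun j => by
    rcases eq_or_ne j i with rfl | hj
    · simpa [Nat.one_le_iff_ne_zero] using hi
    · simp [hj]
  have hα' := tsub_add_cancel_of_le hle
  refine hα' ▸ add_single _ i (ih _ (lt_of_le_of_ne tsub_le_self fun h => ?_))
  rw [h, add_eq_left, Pi.single_eq_zero_iff] at hα'
  exact one_ne_zero hα'

theorem exists_discDiffMulti_eq_linearCombination_invTerm (α : Fin n → ℕ) :
    ∃ c ∈ Finsupp.supported ℤ ℤ {W | IsDecomposition α W},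
      ∀ (A : Type u) [Ring A] (S Sinv : (Fin n → ℤ) → A), (∀ k, S k * Sinv k = 1) →
        (∀ k, Sinv k * S k = 1) → ∀ k,
          discDiffMulti α Sinv k = Finsupp.linearCombination ℤ (invTerm S Sinv · k) c := by
  induction α using multiIndex_induction with
  | zero =>
    refine ⟨Finsupp.single [] 1, Finsupp.single_mem_supported ℤ _ ⟨List.not_mem_nil, rfl⟩, ?_⟩
    intro A _ S Sinv _ _ k
    simp [invTerm]
  | add_single β i ih =>
    obtain ⟨c, hc, hrepr⟩ := ih
    refine ⟨Finsupp.linearCombination ℤ (formalDiff i) c,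
      Submodule.finsuppSum_mem _ _ _ _ fun W hW => Submodule.smul_mem _ _
        (formalDiff_mem_supported ((Finsupp.mem_supported ℤ c).1 hc
          (Finsupp.mem_support_iff.2 hW)) i), ?_⟩
    intro A _ S Sinv hS hSinv k
    rw [discDiffMulti_add_single, funext (hrepr A S Sinv hS hSinv), discDiff_linearCombination,
      Finsupp.linearCombination_linearCombination]
    simp only [linearCombination_formalDiff, discDiff_invTerm hS hSinv]

theorem invTerm_eq_mul_prod {A : Type*} [Ring A] (S Sinv : (Fin n → ℤ) → A)
    (W : List (Fin n → ℕ)) (k : Fin n → ℤ) :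
    invTerm S Sinv W k = Sinv (k - multiIndexCast W.sum) *
      ((List.range W.length).map fun j =>
        discDiffMulti (W.getD j 0) S (k - multiIndexCast (W.drop (j + 1)).sum) *
          Sinv (k - multiIndexCast (W.drop (j + 1)).sum)).prod := by
  induction W with
  | nil => simp [invTerm]
  | cons ω W ih =>
    simp only [invTerm_cons_apply, ih, List.length_cons, List.range_succ_eq_map, List.map_cons,
      List.map_map, List.prod_cons, List.sum_cons, Function.comp_def, List.getD_cons_zero,
      List.getD_cons_succ, List.drop_succ_cons, List.drop_zero, mul_assoc]

end

/-- Difference formula for inverses: there is a finite set `Z` consisting exactly of the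
ordered decompositions `𝒲 = (ω^1, …, ω^r)` of `α` (with `1 ≤ r ≤ |α|`, each `ω^j ≠ 0`,
`ω^j ≤ α`, and `ω^1 + ⋯ + ω^r = α`, encoded as lists) and integer constants `c_𝒲` such
that for every commuting sequence `S` of invertible operators,
`Δ^α(S⁻¹)(k) = Σ_𝒲 c_𝒲 S(k−α)⁻¹ ∘ Π_j [(Δ^{ω^j}S)(k−ω*_j) ∘ S(k−ω*_j)⁻¹]`,
where `ω*_j = Σ_{l > j} ω^l`. -/
theorem discDiffMulti_inv (n : ℕ) (α : Fin n → ℕ) (hα : α ≠ 0) :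
    ∃ (Z : Finset (List (Fin n → ℕ))) (c : List (Fin n → ℕ) → ℤ),
      (∀ W : List (Fin n → ℕ), W ∈ Z ↔
        (1 ≤ W.length ∧ W.length ≤ ∑ i, α i ∧
          (∀ ω ∈ W, ω ≠ 0 ∧ ω ≤ α) ∧ W.sum = α)) ∧
      ∀ (X : Type u) [NormedAddCommGroup X] [NormedSpace ℂ X]
        (S Sinv : (Fin n → ℤ) → (X →L[ℂ] X)),
        (∀ k l, Commute (S k) (S l)) →
        (∀ k l, Commute (S k) (Sinv l)) →
        (∀ k, S k * Sinv k = 1 ∧ Sinv k * S k = 1) →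
        ∀ k : Fin n → ℤ,
          discDiffMulti α Sinv k =
            ∑ W ∈ Z, c W •
              (Sinv (k - fun i => (α i : ℤ)) *
                ((List.range W.length).map (fun j =>
                  discDiffMulti (W.getD j 0) S
                      (k - fun i => (((W.drop (j + 1)).sum) i : ℤ)) *
                    Sinv (k - fun i => (((W.drop (j + 1)).sum) i : ℤ)))).prod) := by
  obtain ⟨c, hc, hrepr⟩ := exists_discDiffMulti_eq_linearCombination_invTerm α
  have hfin := setOf_isDecomposition_finite α
  refine ⟨hfin.toFinset, c, fun W => by simp [isDecomposition_iff hα], ?_⟩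
  intro X _ _ S Sinv _ _ hS k
  rw [hrepr _ S Sinv (fun k => (hS k).1) (fun k => (hS k).2) k, Finsupp.linearCombination_apply,
    Finsupp.sum_of_support_subset c (hfin.subset_toFinset.2 hc)
      (fun W a => a • invTerm S Sinv W k) fun _ _ => zero_smul ℤ _]
  refine Finset.sum_congr rfl fun W hW => ?_
  rw [invTerm_eq_mul_prod, (hfin.mem_toFinset.1 hW).2]
  rfl
end

section
/- Characterization of ellipticity: Let P be a polynomial in n variables with complex coefficients. Then P is elliptic if and only if for every polynomial N in n variables with complex coefficients satisfying deg N ≤ deg P there exist a constant C > 0 and a bounded subset G ⊂ ℝⁿ such that the estimate |ξ|^m · |N(ξ)| ≤ C · |P(ξ)| holds for all integers m with 0 ≤ m ≤ deg P − deg N and all ξ ∈ ℝⁿ \ G. -/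
/-!
On the unit sphere a homogeneous polynomial of degree `k` is bounded, and bounded away from zero
when it has no zero there; by homogeneity it is therefore `O(‖ξ‖ ^ k)` as `ξ → ∞`, and in the
second case it is also bounded below by a multiple of `‖ξ‖ ^ k`. Hence `P - P^# = o(‖ξ‖ ^ d)`
with `d = deg P`, so ellipticity gives `‖ξ‖ ^ d = O(P)`, and then
`‖ξ‖ ^ m * N = O(‖ξ‖ ^ d) = O(P)` whenever `m + deg N ≤ d`. Conversely, the estimate with
`N = 1`, `m = d` says `‖ξ‖ ^ d = O(P)`; if `P^#(ξ₀) = 0` for some `ξ₀ ≠ 0`, then along the ray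
`t • ξ₀` we get `P = P - P^# = o(t ^ d)`, a contradiction.
-/

open MvPolynomial Filter Asymptotics Bornology Metric Finset

/-- `P` is elliptic: its principal part `P^#` (the homogeneous component of degree
`deg P`) does not vanish on `ℝⁿ \ {0}`. -/
def IsElliptic {n : ℕ} (P : MvPolynomial (Fin n) ℂ) : Prop :=
  ∀ ξ : EuclideanSpace ℝ (Fin n), ξ ≠ 0 →
    MvPolynomial.eval (fun i => (ξ i : ℂ))
      (MvPolynomial.homogeneousComponent P.totalDegree P) ≠ 0

theorem Bornology.eventually_cobounded_iff {α : Type*} [Bornology α] {p : α → Prop} :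
    (∀ᶠ x in cobounded α, p x) ↔ ∃ G : Set α, IsBounded G ∧ ∀ x ∉ G, p x := by
  constructor
  · intro h
    exact ⟨{x | p x}ᶜ, isBounded_def.2 (by rwa [compl_compl]), fun x hx => by simpa using hx⟩
  · rintro ⟨G, hG, hp⟩
    exact mem_of_superset (isBounded_def.1 hG) hp

namespace MvPolynomial

theorem IsHomogeneous.eval_smul {σ R : Type*} [CommSemiring R] {p : MvPolynomial σ R} {k : ℕ}
    (hp : p.IsHomogeneous k) (c : R) (x : σ → R) : eval (c • x) p = c ^ k * eval x p := by
  rw [eval_eq, eval_eq, mul_sum]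
  refine sum_congr rfl fun d hd => ?_
  have hdk : ∑ i ∈ d.support, d i = k := by
    simpa [Finsupp.weight_apply, Finsupp.sum] using hp (mem_support_iff.mp hd)
  simp_rw [Pi.smul_apply, smul_eq_mul, mul_pow, prod_mul_distrib, prod_pow_eq_pow_sum, hdk]
  ring

noncomputable abbrev principalPart {σ R : Type*} [CommSemiring R] (p : MvPolynomial σ R) :
    MvPolynomial σ R :=
  homogeneousComponent p.totalDegree p

theorem isHomogeneous_principalPart {σ R : Type*} [CommSemiring R] (p : MvPolynomial σ R) :
    p.principalPart.IsHomogeneous p.totalDegree :=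
  homogeneousComponent_isHomogeneous _ p

variable {ι : Type*}

noncomputable def evalReal (p : MvPolynomial ι ℂ) (ξ : EuclideanSpace ℝ ι) : ℂ :=
  eval (fun i => (ξ i : ℂ)) p

theorem continuous_evalReal (p : MvPolynomial ι ℂ) : Continuous (evalReal p) :=
  p.continuous_eval.comp <| continuous_pi fun i =>
    Complex.continuous_ofReal.comp (EuclideanSpace.proj i).continuous

theorem evalReal_eq_sum_homogeneousComponent (p : MvPolynomial ι ℂ) :
    evalReal p = ∑ k ∈ range (p.totalDegree + 1), evalReal (homogeneousComponent k p) := by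
  ext ξ
  conv_lhs => rw [← p.sum_homogeneousComponent]
  simp only [evalReal, map_sum, Finset.sum_apply]

theorem IsHomogeneous.evalReal_smul {p : MvPolynomial ι ℂ} {k : ℕ} (hp : p.IsHomogeneous k)
    (t : ℝ) (ξ : EuclideanSpace ℝ ι) : evalReal p (t • ξ) = (t : ℂ) ^ k * evalReal p ξ := by
  have hcoord : (fun i => ((t • ξ) i : ℂ)) = (t : ℂ) • fun i => (ξ i : ℂ) := by
    ext i
    simp
  rw [evalReal, evalReal, hcoord, hp.eval_smul]

variable [Fintype ι]

theorem IsHomogeneous.norm_evalReal_eq {p : MvPolynomial ι ℂ} {k : ℕ} (hp : p.IsHomogeneous k)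
    {ξ : EuclideanSpace ℝ ι} (hξ : ξ ≠ 0) :
    ‖evalReal p ξ‖ = ‖ξ‖ ^ k * ‖evalReal p (‖ξ‖⁻¹ • ξ)‖ := by
  conv_lhs => rw [← smul_inv_smul₀ (norm_ne_zero_iff.2 hξ) ξ]
  rw [hp.evalReal_smul, norm_mul, norm_pow, Complex.norm_real, norm_norm]

theorem IsHomogeneous.evalReal_isBigO {p : MvPolynomial ι ℂ} {k : ℕ} (hp : p.IsHomogeneous k) :
    evalReal p =O[cobounded _] (‖·‖ ^ k) := by
  obtain ⟨M, hM⟩ := (isCompact_sphere (0 : EuclideanSpace ℝ ι) 1).exists_bound_of_continuousOn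
    (continuous_evalReal p).continuousOn
  refine IsBigO.of_bound M ?_
  filter_upwards [eventually_ne_cobounded 0] with ξ hξ
  rw [hp.norm_evalReal_eq hξ, norm_pow, norm_norm, mul_comm]
  gcongr
  exact hM _ (mem_sphere_zero_iff_norm.2 (norm_smul_inv_norm (𝕜 := ℝ) hξ))

theorem IsHomogeneous.isBigO_evalReal {p : MvPolynomial ι ℂ} {k : ℕ} (hp : p.IsHomogeneous k)
    (h : ∀ ξ, ξ ≠ 0 → evalReal p ξ ≠ 0) : (‖·‖ ^ k) =O[cobounded _] evalReal p := by
  obtain ⟨c, hc, hcle⟩ := (isCompact_sphere (0 : EuclideanSpace ℝ ι) 1).exists_forall_le'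
    (continuous_evalReal p).norm.continuousOn
    fun ξ hξ => norm_pos_iff.2 (h ξ (ne_zero_of_mem_unit_sphere ⟨ξ, hξ⟩))
  refine IsBigO.of_bound c⁻¹ ?_
  filter_upwards [eventually_ne_cobounded 0] with ξ hξ
  rw [hp.norm_evalReal_eq hξ, norm_pow, norm_norm, mul_comm, le_mul_inv_iff₀ hc]
  gcongr
  exact hcle _ (mem_sphere_zero_iff_norm.2 (norm_smul_inv_norm (𝕜 := ℝ) hξ))

theorem IsHomogeneous.evalReal_isLittleO {p : MvPolynomial ι ℂ} {k d : ℕ}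
    (hp : p.IsHomogeneous k) (hkd : k < d) : evalReal p =o[cobounded _] (‖·‖ ^ d) :=
  hp.evalReal_isBigO.trans_isLittleO <|
    (isLittleO_pow_pow_atTop_of_lt hkd).comp_tendsto tendsto_norm_cobounded_atTop

theorem evalReal_isBigO_of_totalDegree_le {p : MvPolynomial ι ℂ} {e : ℕ}
    (he : p.totalDegree ≤ e) : evalReal p =O[cobounded _] (‖·‖ ^ e) := by
  rw [evalReal_eq_sum_homogeneousComponent]
  refine IsBigO.sum fun k hk => (homogeneousComponent_isHomogeneous k p).evalReal_isBigO.trans ?_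
  exact (isBigO_pow_pow_cobounded_of_le (R := ℝ) ((mem_range_succ_iff.1 hk).trans he)).comp_tendsto
    (tendsto_norm_cobounded_atTop.mono_right IsOrderBornology.atTop_le_cobounded)

theorem evalReal_sub_principalPart_isLittleO (p : MvPolynomial ι ℂ) :
    (evalReal p - evalReal p.principalPart) =o[cobounded _] (‖·‖ ^ p.totalDegree) := by
  rw [evalReal_eq_sum_homogeneousComponent p, sum_range_succ, add_sub_cancel_right]
  exact IsLittleO.sum fun k hk =>
    (homogeneousComponent_isHomogeneous k p).evalReal_isLittleO (mem_range.1 hk)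

end MvPolynomial

theorem IsElliptic.isBigO_norm_pow_evalReal {n : ℕ} {P : MvPolynomial (Fin n) ℂ}
    (hP : IsElliptic P) :
    (fun ξ : EuclideanSpace ℝ (Fin n) => ‖ξ‖ ^ P.totalDegree) =O[cobounded _] evalReal P := by
  have hprincipal := P.isHomogeneous_principalPart.isBigO_evalReal hP
  have hequiv : evalReal P ~[cobounded _] evalReal P.principalPart :=
    (evalReal_sub_principalPart_isLittleO P).trans_isBigO hprincipal
  exact hprincipal.trans hequiv.symm.isBigO

theorem IsElliptic.isBigO_norm_pow_mul_evalReal {n : ℕ} {P N : MvPolynomial (Fin n) ℂ}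
    (hP : IsElliptic P) (hN : N.totalDegree ≤ P.totalDegree) :
    (fun ξ : EuclideanSpace ℝ (Fin n) =>
      ‖ξ‖ ^ (P.totalDegree - N.totalDegree) * ‖evalReal N ξ‖) =O[cobounded _]
      evalReal P := by
  have hprod := (isBigO_refl
    (fun ξ : EuclideanSpace ℝ (Fin n) => ‖ξ‖ ^ (P.totalDegree - N.totalDegree)) (cobounded _)).mul
      (evalReal_isBigO_of_totalDegree_le (le_refl N.totalDegree)).norm_left
  refine IsBigO.trans ?_ hP.isBigO_norm_pow_evalReal
  simpa only [← pow_add, Nat.sub_add_cancel hN] using hprod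

theorem isElliptic_of_isBigO {n : ℕ} {P : MvPolynomial (Fin n) ℂ}
    (h : (fun ξ : EuclideanSpace ℝ (Fin n) => ‖ξ‖ ^ P.totalDegree) =O[cobounded _] evalReal P) :
    IsElliptic P := by
  intro ξ₀ hξ₀ hzero
  have hray : Tendsto (fun t : ℝ => t • ξ₀) atTop (cobounded _) :=
    tendsto_norm_atTop_iff_cobounded.1 <| by
      simpa [norm_smul] using tendsto_abs_atTop_atTop.atTop_mul_const (norm_pos_iff.2 hξ₀)
  have heq : evalReal P ∘ (fun t : ℝ => t • ξ₀) =
      (evalReal P - evalReal P.principalPart) ∘ (fun t : ℝ => t • ξ₀) := by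
    ext t
    have hzero' : evalReal P.principalPart ξ₀ = 0 := hzero
    simp [P.isHomogeneous_principalPart.evalReal_smul, hzero']
  have hself := ((h.comp_tendsto hray).trans_eventuallyEq heq.eventuallyEq).trans_isLittleO
    ((evalReal_sub_principalPart_isLittleO P).comp_tendsto hray)
  refine isLittleO_irrefl' ((eventually_gt_atTop 0).frequently.mono fun t ht => ?_) hself
  simp [norm_smul, ht.ne', hξ₀]

/-- Characterization of ellipticity. -/
theorem isElliptic_iff {n : ℕ} (P : MvPolynomial (Fin n) ℂ) :
    IsElliptic P ↔
      ∀ N : MvPolynomial (Fin n) ℂ, N.totalDegree ≤ P.totalDegree →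
        ∃ C : ℝ, 0 < C ∧ ∃ G : Set (EuclideanSpace ℝ (Fin n)), Bornology.IsBounded G ∧
          ∀ m : ℕ, m ≤ P.totalDegree - N.totalDegree →
            ∀ ξ : EuclideanSpace ℝ (Fin n), ξ ∉ G →
              ‖ξ‖ ^ m * ‖MvPolynomial.eval (fun i => (ξ i : ℂ)) N‖ ≤
                C * ‖MvPolynomial.eval (fun i => (ξ i : ℂ)) P‖ := by
  constructor
  · intro hP N hN
    obtain ⟨C, hC, hbound⟩ := (hP.isBigO_norm_pow_mul_evalReal hN).exists_pos
    obtain ⟨G, hG, hGbound⟩ :=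
      eventually_cobounded_iff.1 (hbound.bound.and (eventually_cobounded_le_norm 1))
    refine ⟨C, hC, G, hG, fun m hm ξ hξ => ?_⟩
    obtain ⟨hCξ, hξ1⟩ := hGbound ξ hξ
    calc ‖ξ‖ ^ m * ‖evalReal N ξ‖
        ≤ ‖ξ‖ ^ (P.totalDegree - N.totalDegree) * ‖evalReal N ξ‖ := by gcongr
      _ ≤ C * ‖evalReal P ξ‖ := by simpa only [norm_mul, norm_pow, norm_norm] using hCξ
  · intro h
    obtain ⟨C, -, G, hG, hCG⟩ := h 1 (by simp)
    refine isElliptic_of_isBigO (IsBigO.of_bound C (eventually_cobounded_iff.2 ⟨G, hG, ?_⟩))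
    intro ξ hξ
    simpa [evalReal] using hCG P.totalDegree (by simp) ξ hξ
end

section
/- Strict 1-regularity of quotients of elliptic polynomials: Let P, Q, N be polynomials in n variables with complex coefficients such that P and Q are elliptic, deg N ≤ deg P, and Q(k) ≠ 0 for all k ∈ ℤⁿ. Define a_k := N(k)/Q(k) and b_k := P(k)/Q(k) for k ∈ ℤⁿ. Then the pair (a_k, b_k)_{k ∈ ℤⁿ} is strictly 1-regular: for every multi-index γ ∈ ℕ₀ⁿ with 0 ≤ γ ≤ (1,…,1) there exist a finite set K ⊂ ℤⁿ and a constant C > 0 such that |k|^{|γ|} · max{ |Δ^γ a(k)|, |Δ^γ b(k)| } ≤ C |b_k| for all k ∈ ℤⁿ \ K. -/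
open scoped BigOperators

/-!
Write `Δ^γ (N / Q)` as a quotient `A / D` of polynomials, `D` a product of lattice translates
of `Q`. A single difference turns `A / D` into `(A τD - D τA) / (D τD)`, `τ` a unit translation;
since translation does not change the leading part of a polynomial, `deg A - deg D` drops by one.
Because `Q` is elliptic and has no zeros on `ℤⁿ`, each translate of `Q` is as large as `|k|^deg Q`
away from a finite set, so `|Δ^γ a k|, |Δ^γ b k| = O(|k|^(deg P - deg Q - |γ|))`; ellipticity of `P`
gives the matching lower bound `|b k| ≳ |k|^(deg P - deg Q)`.
-/

open MvPolynomial Filter Asymptotics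

namespace MvPolynomial

variable {σ R : Type*}

section CommRing

variable [CommRing R]

/-- Unlike `totalDegree P ≤ d`, the bound `d` may be negative, and then only `P = 0` meets it. -/
def TotalDegreeLE (P : MvPolynomial σ R) (d : ℤ) : Prop :=
  ∀ m ∈ P.support, (m.degree : ℤ) ≤ d

namespace TotalDegreeLE

variable {P Q : MvPolynomial σ R} {a b : ℤ}

theorem mono (hP : TotalDegreeLE P a) (hab : a ≤ b) : TotalDegreeLE P b :=
  fun m hm => (hP m hm).trans hab

theorem add (hP : TotalDegreeLE P a) (hQ : TotalDegreeLE Q a) : TotalDegreeLE (P + Q) a := by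
  classical
  intro m hm
  rcases Finset.mem_union.mp (support_add hm) with h | h
  exacts [hP m h, hQ m h]

theorem neg (hP : TotalDegreeLE P a) : TotalDegreeLE (-P) a := by
  simpa [TotalDegreeLE] using hP

theorem sub (hP : TotalDegreeLE P a) (hQ : TotalDegreeLE Q a) : TotalDegreeLE (P - Q) a :=
  sub_eq_add_neg P Q ▸ hP.add hQ.neg

theorem mul (hP : TotalDegreeLE P a) (hQ : TotalDegreeLE Q b) : TotalDegreeLE (P * Q) (a + b) := by
  classical
  intro m hm
  obtain ⟨m₁, hm₁, m₂, hm₂, rfl⟩ := Finset.mem_add.mp (support_mul P Q hm)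
  push_cast [map_add]
  exact add_le_add (hP m₁ hm₁) (hQ m₂ hm₂)

theorem sum {ι : Type*} (s : Finset ι) {P : ι → MvPolynomial σ R}
    (hP : ∀ i ∈ s, TotalDegreeLE (P i) a) : TotalDegreeLE (∑ i ∈ s, P i) a := by
  classical
  intro m hm
  obtain ⟨i, hi, hm⟩ := Finset.mem_biUnion.mp (support_sum hm)
  exact hP i hi m hm

end TotalDegreeLE

theorem totalDegreeLE_totalDegree (P : MvPolynomial σ R) : TotalDegreeLE P P.totalDegree :=
  fun _ hm => by exact_mod_cast le_totalDegree hm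

theorem totalDegreeLE_monomial (s : σ →₀ ℕ) (r : R) : TotalDegreeLE (monomial s r) s.degree := by
  intro m hm
  rw [Finset.mem_singleton.mp (support_monomial_subset hm)]

noncomputable def shift (c : σ → R) : MvPolynomial σ R →ₐ[R] MvPolynomial σ R :=
  aeval fun i => X i - C (c i)

theorem eval_shift (c x : σ → R) (P : MvPolynomial σ R) : eval x (shift c P) = eval (x - c) P := by
  induction P using MvPolynomial.induction_on <;> simp_all [shift]

theorem TotalDegreeLE.shift_mul_sub {c : σ → R} {P Q : MvPolynomial σ R} {a b : ℤ}
    (hP : TotalDegreeLE P a) (hP' : TotalDegreeLE (shift c P - P) (a - 1))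
    (hQ : TotalDegreeLE Q b) (hQ' : TotalDegreeLE (shift c Q - Q) (b - 1)) :
    TotalDegreeLE (shift c (P * Q) - P * Q) (a + b - 1) := by
  have hsP : TotalDegreeLE (shift c P) a := by
    simpa using (hP'.mono (by omega : a - 1 ≤ a)).add hP
  rw [map_mul, show shift c P * shift c Q - P * Q
    = shift c P * (shift c Q - Q) + (shift c P - P) * Q by ring]
  exact ((hsP.mul hQ').mono (by omega)).add ((hP'.mul hQ).mono (by omega))

theorem totalDegreeLE_X_pow (i : σ) (e : ℕ) : TotalDegreeLE (X i ^ e : MvPolynomial σ R) e := by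
  simpa [X_pow_eq_monomial] using totalDegreeLE_monomial (Finsupp.single i e) (1 : R)

theorem totalDegreeLE_shift_X_pow_sub (c : σ → R) (i : σ) (e : ℕ) :
    TotalDegreeLE (shift c (X i ^ e) - X i ^ e) (e - 1) := by
  induction e with
  | zero => simp [TotalDegreeLE]
  | succ e ih =>
    have hX : TotalDegreeLE (shift c (X i) - X i) (1 - 1) := by
      simpa [shift] using (totalDegreeLE_monomial (σ := σ) 0 (-c i))
    rw [pow_succ]
    exact ((totalDegreeLE_X_pow i e).shift_mul_sub ih (by simpa using totalDegreeLE_X_pow i 1)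
      hX).mono (by push_cast; omega)

theorem totalDegreeLE_shift_monomial_sub (c : σ → R) (s : σ →₀ ℕ) (r : R) :
    TotalDegreeLE (shift c (monomial s r) - monomial s r) (s.degree - 1) := by
  induction s using Finsupp.induction generalizing r with
  | zero => simp [← C_apply, TotalDegreeLE]
  | single_add i e s _ _ ih =>
    rw [monomial_single_add]
    exact ((totalDegreeLE_X_pow i e).shift_mul_sub (totalDegreeLE_shift_X_pow_sub c i e)
      (totalDegreeLE_monomial s r) (ih r)).mono (by simp)

theorem TotalDegreeLE.shift_sub (c : σ → R) {P : MvPolynomial σ R} {d : ℤ}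
    (hP : TotalDegreeLE P d) : TotalDegreeLE (shift c P - P) (d - 1) := by
  conv_lhs => rw [P.as_sum]
  rw [map_sum, ← Finset.sum_sub_distrib]
  exact TotalDegreeLE.sum _ fun m hm =>
    (totalDegreeLE_shift_monomial_sub c m _).mono (by linarith [hP m hm])

theorem totalDegreeLE_sub_homogeneousComponent (P : MvPolynomial σ R) :
    TotalDegreeLE (P - homogeneousComponent P.totalDegree P) (P.totalDegree - 1) := by
  intro m hm
  rw [mem_support_iff, coeff_sub, coeff_homogeneousComponent] at hm
  have hmP : m ∈ P.support := mem_support_iff.mpr fun h => hm (by simp [h])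
  have hne : m.degree ≠ P.totalDegree := fun h => hm (by simp [h])
  have hle : m.degree ≤ P.totalDegree := le_totalDegree hmP
  omega

end CommRing

theorem TotalDegreeLE.norm_eval_le [NormedCommRing R] [NormOneClass R] {P : MvPolynomial σ R}
    {d : ℤ} (hP : TotalDegreeLE P d) {z : σ → R} {t : ℝ} (ht : 1 ≤ t) (hz : ∀ i, ‖z i‖ ≤ t) :
    ‖eval z P‖ ≤ (∑ m ∈ P.support, ‖coeff m P‖) * t ^ d := by
  rw [eval_eq, Finset.sum_mul]
  refine (norm_sum_le _ _).trans (Finset.sum_le_sum fun m hm => ?_)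
  have hprod : ‖∏ i ∈ m.support, z i ^ m i‖ ≤ t ^ d := calc
    ‖∏ i ∈ m.support, z i ^ m i‖ ≤ ∏ i ∈ m.support, ‖z i‖ ^ m i :=
      (Finset.norm_prod_le _ _).trans (Finset.prod_le_prod (fun _ _ => norm_nonneg _)
        fun i _ => norm_pow_le _ _)
    _ ≤ ∏ i ∈ m.support, t ^ m i :=
      Finset.prod_le_prod (fun _ _ => by positivity) fun i _ =>
        pow_le_pow_left₀ (norm_nonneg _) (hz i) _
    _ = t ^ (m.degree : ℤ) := by rw [Finset.prod_pow_eq_pow_sum, zpow_natCast]; rfl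
    _ ≤ t ^ d := zpow_le_zpow_right₀ ht (hP m hm)
  exact (norm_mul_le _ _).trans (mul_le_mul_of_nonneg_left hprod (norm_nonneg _))

theorem TotalDegreeLE.isBigO_eval [NormedCommRing R] [NormOneClass R] {P : MvPolynomial σ R}
    {d : ℤ} (hP : TotalDegreeLE P d) {α : Type*} {l : Filter α} {z : α → σ → R} {ρ : α → ℝ}
    (hρ : ∀ᶠ x in l, 1 ≤ ρ x) (hz : ∀ x i, ‖z x i‖ ≤ ρ x) :
    (fun x => eval (z x) P) =O[l] fun x => ρ x ^ d :=
  IsBigO.of_bound _ <| hρ.mono fun x hx => by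
    rw [Real.norm_of_nonneg (by positivity)]
    exact hP.norm_eval_le hx (hz x)

theorem IsHomogeneous.eval_smul_s14 [CommSemiring R] {H : MvPolynomial σ R} {d : ℕ}
    (hH : H.IsHomogeneous d) (c : R) (z : σ → R) : eval (c • z) H = c ^ d * eval z H := by
  rw [eval_eq, eval_eq, Finset.mul_sum]
  refine Finset.sum_congr rfl fun m hm => ?_
  have hdeg : m.degree = d := by
    rw [Finsupp.degree_eq_weight_one]; exact hH (mem_support_iff.mp hm)
  simp_rw [Pi.smul_apply, smul_eq_mul, mul_pow, Finset.prod_mul_distrib,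
    Finset.prod_pow_eq_pow_sum, ← Finsupp.degree_apply, hdeg]
  ring

end MvPolynomial

section Growth

variable {α : Type*} {l : Filter α} {ρ : α → ℝ}

theorem Filter.Tendsto.isLittleO_zpow_of_lt (hρ : Tendsto ρ l atTop) {a b : ℤ} (hab : a < b) :
    (fun x => ρ x ^ a) =o[l] fun x => ρ x ^ b := by
  have hρ0 : ∀ᶠ x in l, ρ x ^ a = ρ x ^ b * ρ x ^ (a - b) :=
    (hρ.eventually_gt_atTop 0).mono fun x hx => by rw [← zpow_add₀ hx.ne']; ring_nf
  have hsmall : (fun x => ρ x ^ (a - b)) =o[l] fun _ => (1 : ℝ) :=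
    (isLittleO_one_iff ℝ).mpr ((tendsto_zpow_atTop_zero (by omega)).comp hρ)
  refine ((isBigO_refl (fun x => ρ x ^ b) l).mul_isLittleO hsmall).congr' ?_ ?_
  · exact hρ0.mono fun x hx => hx.symm
  · simp

theorem Filter.Tendsto.isBigO_zpow_of_le (hρ : Tendsto ρ l atTop) {a b : ℤ} (hab : a ≤ b) :
    (fun x => ρ x ^ a) =O[l] fun x => ρ x ^ b := by
  rcases hab.eq_or_lt with rfl | hlt
  exacts [isBigO_refl _ _, (hρ.isLittleO_zpow_of_lt hlt).isBigO]

end Growth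

namespace IsElliptic

variable {n : ℕ} {P : MvPolynomial (Fin n) ℂ}

theorem exists_pos_mul_le_homogeneousComponent (hP : IsElliptic P) :
    ∃ c > 0, ∀ x : EuclideanSpace ℝ (Fin n), x ≠ 0 →
      c * ‖x‖ ^ P.totalDegree ≤
        ‖eval (fun i => (x i : ℂ)) (homogeneousComponent P.totalDegree P)‖ := by
  set H := homogeneousComponent P.totalDegree P
  have hcont : Continuous fun x : EuclideanSpace ℝ (Fin n) => ‖eval (fun i => (x i : ℂ)) H‖ :=
    (continuous_eval H |>.comp (by fun_prop)).norm
  obtain ⟨c, hc, hcle⟩ := (isCompact_sphere (0 : EuclideanSpace ℝ (Fin n)) 1).exists_forall_le'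
    hcont.continuousOn fun x hx => norm_pos_iff.mpr (hP x (ne_zero_of_mem_unit_sphere ⟨x, hx⟩))
  refine ⟨c, hc, fun x hx => ?_⟩
  have hu : ‖x‖⁻¹ • x ∈ Metric.sphere 0 1 := by simp [norm_smul, hx]
  have hx' : (fun i => (x i : ℂ)) = (‖x‖ : ℂ) • fun i => ((‖x‖⁻¹ • x) i : ℂ) := by
    ext i
    simp [hx]
  rw [hx', (homogeneousComponent_isHomogeneous _ _).eval_smul_s14, norm_mul, norm_pow,
    Complex.norm_real, norm_norm, mul_comm]
  gcongr
  exact hcle _ hu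

theorem isBigO_eval (hP : IsElliptic P) :
    (fun x : EuclideanSpace ℝ (Fin n) => ‖x‖ ^ P.totalDegree) =O[cocompact _]
      fun x => eval (fun i => (x i : ℂ)) P := by
  set d := P.totalDegree
  set H := homogeneousComponent d P
  have hnorm := tendsto_norm_cocompact_atTop (E := EuclideanSpace ℝ (Fin n))
  have hH : (fun x : EuclideanSpace ℝ (Fin n) => ‖x‖ ^ d) =O[cocompact _]
      fun x => eval (fun i => (x i : ℂ)) H := by
    obtain ⟨c, hc, hcle⟩ := hP.exists_pos_mul_le_homogeneousComponent
    refine IsBigO.of_bound c⁻¹ ((hnorm.eventually_gt_atTop 0).mono fun x hx => ?_)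
    rw [norm_pow, norm_norm, inv_mul_eq_div, le_div_iff₀' hc]
    exact hcle x (norm_pos_iff.mp hx)
  have hL : (fun x : EuclideanSpace ℝ (Fin n) => eval (fun i => (x i : ℂ)) (P - H))
      =o[cocompact _] fun x => ‖x‖ ^ d := by
    refine IsBigO.trans_isLittleO (g := fun x : EuclideanSpace ℝ (Fin n) => ‖x‖ ^ ((d : ℤ) - 1))
      ?_ ?_
    · refine (totalDegreeLE_sub_homogeneousComponent P).isBigO_eval
        (hnorm.eventually_ge_atTop 1) fun x i => ?_
      rw [Complex.norm_real]
      exact PiLp.norm_apply_le x i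
    · simpa using hnorm.isLittleO_zpow_of_lt (sub_one_lt (d : ℤ))
  have hPHL : (fun x : EuclideanSpace ℝ (Fin n) => eval (fun i => (x i : ℂ)) P) =
      (fun x => eval (fun i => (x i : ℂ)) (P - H)) + fun x => eval (fun i => (x i : ℂ)) H := by
    ext x
    simp
  exact hH.trans (hPHL ▸ (hL.trans_isBigO hH).right_isBigO_add)

end IsElliptic

section Lattice

variable {n : ℕ}

def toEuclideanSpace (k : Fin n → ℤ) : EuclideanSpace ℝ (Fin n) :=
  WithLp.toLp 2 fun i => (k i : ℝ)

theorem norm_toEuclideanSpace (k : Fin n → ℤ) : ‖toEuclideanSpace k‖ = √(∑ i, (k i : ℝ) ^ 2) := by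
  simp [toEuclideanSpace, EuclideanSpace.norm_eq]

theorem toEuclideanSpace_sub (k v : Fin n → ℤ) :
    toEuclideanSpace (k - v) = toEuclideanSpace k - toEuclideanSpace v := by
  ext i
  simp [toEuclideanSpace]

theorem norm_intCast_le_norm_toEuclideanSpace (k : Fin n → ℤ) (i : Fin n) :
    ‖(k i : ℂ)‖ ≤ ‖toEuclideanSpace k‖ := by
  simpa [toEuclideanSpace] using PiLp.norm_apply_le (toEuclideanSpace k) i

theorem tendsto_toEuclideanSpace_cofinite :
    Tendsto (toEuclideanSpace (n := n)) cofinite (cocompact _) := by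
  refine tendsto_cocompact_of_tendsto_dist_comp_atTop 0 ?_
  rw [← cocompact_eq_cofinite]
  refine tendsto_atTop_mono (fun k => ?_) tendsto_norm_cocompact_atTop
  rw [dist_zero_right]
  refine (pi_norm_le_iff_of_nonneg (norm_nonneg _)).mpr fun i => ?_
  simpa [Int.norm_eq_abs] using norm_intCast_le_norm_toEuclideanSpace k i

theorem tendsto_norm_toEuclideanSpace_cofinite :
    Tendsto (fun k : Fin n → ℤ => ‖toEuclideanSpace k‖) cofinite atTop :=
  tendsto_norm_cocompact_atTop.comp tendsto_toEuclideanSpace_cofinite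

theorem isBigO_norm_toEuclideanSpace_sub (v : Fin n → ℤ) :
    (fun k => ‖toEuclideanSpace k‖) =O[cofinite] fun k => ‖toEuclideanSpace (k - v)‖ := by
  have hlarge : ∀ᶠ k in cofinite, ‖toEuclideanSpace v‖ ≤ ‖toEuclideanSpace (k - v)‖ :=
    (tendsto_norm_toEuclideanSpace_cofinite.comp
      sub_left_injective.tendsto_cofinite).eventually_ge_atTop _
  refine IsBigO.of_bound 2 (hlarge.mono fun k hk => ?_)
  have htri : ‖toEuclideanSpace k‖ ≤ ‖toEuclideanSpace (k - v)‖ + ‖toEuclideanSpace v‖ := by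
    simpa [toEuclideanSpace_sub] using
      norm_le_norm_sub_add (toEuclideanSpace k) (toEuclideanSpace v)
  simp only [norm_norm]
  linarith

theorem MvPolynomial.TotalDegreeLE.isBigO_eval_intCast {P : MvPolynomial (Fin n) ℂ} {d : ℤ}
    (hP : TotalDegreeLE P d) :
    (fun k : Fin n → ℤ => eval (fun i => (k i : ℂ)) P) =O[cofinite]
      fun k => ‖toEuclideanSpace k‖ ^ d :=
  hP.isBigO_eval (tendsto_norm_toEuclideanSpace_cofinite.eventually_ge_atTop 1)
    norm_intCast_le_norm_toEuclideanSpace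

theorem eval_shift_intCast (P : MvPolynomial (Fin n) ℂ) (k v : Fin n → ℤ) :
    eval (fun i => (k i : ℂ)) (shift (fun i => (v i : ℂ)) P) =
      eval (fun i => ((k - v) i : ℂ)) P := by
  rw [eval_shift]
  congr 2
  funext i
  simp

theorem IsElliptic.isBigO_eval_intCast {P : MvPolynomial (Fin n) ℂ} (hP : IsElliptic P) :
    (fun k => ‖toEuclideanSpace k‖ ^ P.totalDegree) =O[cofinite]
      fun k : Fin n → ℤ => eval (fun i => (k i : ℂ)) P := by
  simpa [Function.comp_def, toEuclideanSpace] using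
    hP.isBigO_eval.comp_tendsto tendsto_toEuclideanSpace_cofinite

end Lattice

section RationalSymbol

variable {n : ℕ}

structure IsLatticeElliptic (D : MvPolynomial (Fin n) ℂ) (δ : ℕ) : Prop where
  totalDegreeLE : TotalDegreeLE D δ
  eval_ne_zero : ∀ k : Fin n → ℤ, eval (fun i => (k i : ℂ)) D ≠ 0
  isBigO : (fun k => ‖toEuclideanSpace k‖ ^ δ) =O[cofinite]
    fun k : Fin n → ℤ => eval (fun i => (k i : ℂ)) D

namespace IsLatticeElliptic

variable {D E : MvPolynomial (Fin n) ℂ} {δ ε : ℕ}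

theorem mul (hD : IsLatticeElliptic D δ) (hE : IsLatticeElliptic E ε) :
    IsLatticeElliptic (D * E) (δ + ε) where
  totalDegreeLE := by exact_mod_cast hD.totalDegreeLE.mul hE.totalDegreeLE
  eval_ne_zero k := by simpa using ⟨hD.eval_ne_zero k, hE.eval_ne_zero k⟩
  isBigO := by simpa [pow_add] using hD.isBigO.mul hE.isBigO

theorem shift (hD : IsLatticeElliptic D δ) (v : Fin n → ℤ) :
    IsLatticeElliptic (shift (fun i => (v i : ℂ)) D) δ where
  totalDegreeLE := by
    simpa using ((hD.totalDegreeLE.shift_sub _).mono (sub_one_lt _).le).add hD.totalDegreeLE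
  eval_ne_zero k := by simpa [eval_shift_intCast] using hD.eval_ne_zero (k - v)
  isBigO := by
    simpa [eval_shift_intCast, Function.comp_def] using
      ((isBigO_norm_toEuclideanSpace_sub v).pow δ).trans
        (hD.isBigO.comp_tendsto sub_left_injective.tendsto_cofinite)

end IsLatticeElliptic

theorem IsElliptic.isLatticeElliptic {Q : MvPolynomial (Fin n) ℂ} (hQ : IsElliptic Q)
    (hQ0 : ∀ k : Fin n → ℤ, eval (fun i => (k i : ℂ)) Q ≠ 0) :
    IsLatticeElliptic Q Q.totalDegree :=
  ⟨totalDegreeLE_totalDegree Q, hQ0, hQ.isBigO_eval_intCast⟩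

def IsRationalSymbol (d : ℤ) (f : (Fin n → ℤ) → ℂ) : Prop :=
  ∃ (A D : MvPolynomial (Fin n) ℂ) (δ : ℕ), IsLatticeElliptic D δ ∧ TotalDegreeLE A (d + δ) ∧
    ∀ k, f k = eval (fun i => (k i : ℂ)) A / eval (fun i => (k i : ℂ)) D

theorem IsLatticeElliptic.isRationalSymbol {D : MvPolynomial (Fin n) ℂ} {δ : ℕ}
    (hD : IsLatticeElliptic D δ) (A : MvPolynomial (Fin n) ℂ) :
    IsRationalSymbol (A.totalDegree - δ)
      fun k => eval (fun i => (k i : ℂ)) A / eval (fun i => (k i : ℂ)) D :=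
  ⟨A, D, δ, hD, by simpa using totalDegreeLE_totalDegree A, fun _ => rfl⟩

namespace IsRationalSymbol

variable {d : ℤ} {f : (Fin n → ℤ) → ℂ}

theorem discDiff (hf : IsRationalSymbol d f) (j : Fin n) :
    IsRationalSymbol (d - 1) (discDiff j f) := by
  obtain ⟨A, D, δ, hD, hA, hf⟩ := hf
  -- `Δ_j (A / D) = (A τD - D τA) / (D τD)` for the translation `τ` by `e_j`, and the numerator
  -- `A (τD - D) - D (τA - A)` loses a degree because translation fixes leading parts.
  set φ := MvPolynomial.shift fun i => ((Pi.single j 1 : Fin n → ℤ) i : ℂ)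
  refine ⟨A * φ D - D * φ A, D * φ D, δ + δ, hD.mul (hD.shift _), ?_, fun k => ?_⟩
  · rw [show A * φ D - D * φ A = A * (φ D - D) - D * (φ A - A) by ring]
    exact ((hA.mul (hD.totalDegreeLE.shift_sub _)).mono (by push_cast; omega)).sub
      ((hD.totalDegreeLE.mul (hA.shift_sub _)).mono (by push_cast; omega))
  · simp only [_root_.discDiff, hf, map_sub, map_mul, φ, eval_shift_intCast]
    rw [div_sub_div _ _ (hD.eval_ne_zero k) (hD.eval_ne_zero _)]

theorem iterate_discDiff (hf : IsRationalSymbol d f) (j : Fin n) (m : ℕ) :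
    IsRationalSymbol (d - m) ((_root_.discDiff j)^[m] f) := by
  induction m with
  | zero => simpa using hf
  | succ m ih => simpa [Function.iterate_succ_apply', sub_sub] using ih.discDiff j

theorem discDiffMulti (hf : IsRationalSymbol d f) (γ : Fin n → ℕ) :
    IsRationalSymbol (d - ∑ i, γ i) (discDiffMulti γ f) := by
  suffices ∀ l : List (Fin n), IsRationalSymbol (d - (l.map γ).sum)
      (l.foldr (fun j F => (_root_.discDiff j)^[γ j] ∘ F) id f) by
    rw [Fin.sum_univ_def]
    exact this (List.finRange n)
  intro l
  induction l with
  | nil => simpa using hf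
  | cons j l ih => simpa [sub_sub, add_comm] using ih.iterate_discDiff j (γ j)

theorem isBigO (hf : IsRationalSymbol d f) :
    f =O[cofinite] fun k => ‖toEuclideanSpace k‖ ^ d := by
  obtain ⟨A, D, δ, hD, hA, hf⟩ := hf
  have hρ := tendsto_norm_toEuclideanSpace_cofinite (n := n)
  have hinv := hD.isBigO.inv_rev ((hρ.eventually_gt_atTop 0).mono fun k hk h0 =>
    absurd h0 (pow_ne_zero _ hk.ne'))
  refine (hA.isBigO_eval_intCast.mul hinv).congr' (.of_forall fun k => by simp [hf, div_eq_mul_inv])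
    ((hρ.eventually_gt_atTop 0).mono fun k hk => ?_)
  dsimp only
  rw [← zpow_natCast, ← zpow_neg, ← zpow_add₀ hk.ne', add_neg_cancel_right]

theorem isBigO_pow_mul_discDiffMulti (hf : IsRationalSymbol d f) (γ : Fin n → ℕ) :
    (fun k => ‖toEuclideanSpace k‖ ^ (∑ i, γ i) * ‖_root_.discDiffMulti γ f k‖) =O[cofinite]
      fun k => ‖toEuclideanSpace k‖ ^ d := by
  refine ((isBigO_refl _ _).mul (hf.discDiffMulti γ).isBigO.norm_left).congr' .rfl
    ((tendsto_norm_toEuclideanSpace_cofinite.eventually_gt_atTop 0).mono fun k hk => ?_)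
  dsimp only
  rw [← zpow_natCast, ← zpow_add₀ hk.ne', add_sub_cancel]

end IsRationalSymbol

end RationalSymbol

theorem IsElliptic.isBigO_zpow_div {n : ℕ} {P Q : MvPolynomial (Fin n) ℂ} (hP : IsElliptic P)
    (hQ0 : ∀ k : Fin n → ℤ, eval (fun i => (k i : ℂ)) Q ≠ 0) :
    (fun k => ‖toEuclideanSpace k‖ ^ ((P.totalDegree : ℤ) - Q.totalDegree)) =O[cofinite]
      fun k : Fin n → ℤ => eval (fun i => (k i : ℂ)) P / eval (fun i => (k i : ℂ)) Q := by
  have hQinv := (totalDegreeLE_totalDegree Q).isBigO_eval_intCast.inv_rev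
    (.of_forall fun k h => absurd h (hQ0 k))
  refine (hP.isBigO_eval_intCast.mul hQinv).congr'
    ((tendsto_norm_toEuclideanSpace_cofinite.eventually_gt_atTop 0).mono fun k hk => ?_)
    (.of_forall fun k => by simp [div_eq_mul_inv])
  dsimp only
  rw [zpow_sub₀ hk.ne', zpow_natCast, zpow_natCast, div_eq_mul_inv]

theorem exists_finset_forall_norm_le_of_isBigO_cofinite {α E F : Type*} [Norm E]
    [SeminormedAddCommGroup F] {f : α → E} {g : α → F} (h : f =O[cofinite] g) :
    ∃ K : Finset α, ∃ C : ℝ, 0 < C ∧ ∀ x ∉ K, ‖f x‖ ≤ C * ‖g x‖ := by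
  obtain ⟨C, hC, hfg⟩ := h.exists_pos
  have hfin := eventually_cofinite.mp hfg.bound
  exact ⟨hfin.toFinset, C, hC, fun x hx => by simpa using hx⟩

/-- Strict 1-regularity of quotients of elliptic polynomials. -/
theorem strict_oneRegular_of_elliptic {n : ℕ} (P Q N : MvPolynomial (Fin n) ℂ)
    (hP : IsElliptic P) (hQ : IsElliptic Q) (hN : N.totalDegree ≤ P.totalDegree)
    (hQ0 : ∀ k : Fin n → ℤ, MvPolynomial.eval (fun i => (k i : ℂ)) Q ≠ 0)
    (a b : (Fin n → ℤ) → ℂ)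
    (hadef : ∀ k, a k = MvPolynomial.eval (fun i => (k i : ℂ)) N /
      MvPolynomial.eval (fun i => (k i : ℂ)) Q)
    (hbdef : ∀ k, b k = MvPolynomial.eval (fun i => (k i : ℂ)) P /
      MvPolynomial.eval (fun i => (k i : ℂ)) Q) :
    ∀ γ : Fin n → ℕ, (∀ i, γ i ≤ 1) →
      ∃ K : Finset (Fin n → ℤ), ∃ C : ℝ, 0 < C ∧
        ∀ k : Fin n → ℤ, k ∉ K →
          Real.sqrt (∑ i, ((k i : ℝ)) ^ 2) ^ (∑ i, γ i) *
            max ‖discDiffMulti γ a k‖ ‖discDiffMulti γ b k‖ ≤ C * ‖b k‖ := by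
  intro γ _
  obtain rfl : a = _ := funext hadef
  obtain rfl : b = _ := funext hbdef
  have hQ' := hQ.isLatticeElliptic hQ0
  have hbound : ∀ {d f}, IsRationalSymbol d f → d ≤ (P.totalDegree : ℤ) - Q.totalDegree →
      (fun k => ‖toEuclideanSpace k‖ ^ (∑ i, γ i) * ‖discDiffMulti γ f k‖) =O[cofinite]
        fun k => eval (fun i => (k i : ℂ)) P / eval (fun i => (k i : ℂ)) Q :=
    fun hf hd => (hf.isBigO_pow_mul_discDiffMulti γ).trans
      ((tendsto_norm_toEuclideanSpace_cofinite.isBigO_zpow_of_le hd).trans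
        (hP.isBigO_zpow_div hQ0))
  obtain ⟨K, C, hC, hK⟩ := exists_finset_forall_norm_le_of_isBigO_cofinite
    ((hbound (hQ'.isRationalSymbol N) (by omega)).add (hbound (hQ'.isRationalSymbol P) le_rfl))
  refine ⟨K, C, hC, fun k hk => le_trans ?_ (hK k hk)⟩
  rw [← norm_toEuclideanSpace, mul_max_of_nonneg _ _ (by positivity),
    Real.norm_of_nonneg (by positivity)]
  exact max_le_add_of_nonneg (by positivity) (by positivity)
end

section
/- Parameter-elliptic lower bound: Let P be a polynomial in n variables with complex coefficients of degree m ≥ 1 which is parameter-elliptic in Σ̄_{π−φ} for some φ ∈ (0,π). Then there exist constants C > 0 and R > 0 such that |λ| + |ξ|^m ≤ C · |λ + P(ξ)| for all λ ∈ Σ̄_{π−φ} and all ξ ∈ ℝⁿ with |ξ| ≥ R. -/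
open scoped BigOperators

/-- The closed sector `Σ̄_φ = {λ ∈ ℂ : |arg λ| ≤ φ} ∪ {0}`. -/
def closedSector (φ : ℝ) : Set ℂ := {z : ℂ | |z.arg| ≤ φ} ∪ {0}

/-- `P` is parameter-elliptic in `Σ̄_{π−φ}`: `λ + P^#(ξ) ≠ 0` for all
`(λ, ξ) ∈ Σ̄_{π−φ} × ℝⁿ` with `(λ, ξ) ≠ (0, 0)`, where `P^#` is the principal part. -/
def IsParamElliptic {n : ℕ} (P : MvPolynomial (Fin n) ℂ) (φ : ℝ) : Prop :=
  ∀ z ∈ closedSector (Real.pi - φ), ∀ ξ : EuclideanSpace ℝ (Fin n),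
    ¬(z = 0 ∧ ξ = 0) →
      z + MvPolynomial.eval (fun i => (ξ i : ℂ))
          (MvPolynomial.homogeneousComponent P.totalDegree P) ≠ 0

/-! Under `(λ, ξ) ↦ (t ^ m λ, t ξ)` the function `|λ + P^#(ξ)|` scales by `t ^ m`. It is positive,
hence bounded below by some `c > 0`, on the compact set `{|λ| + |ξ| ^ m = 1}` of the sector, so by
scaling it dominates `c (|λ| + |ξ| ^ m)` everywhere. The lower-order part `P - P^#` is
`O(|ξ| ^ (m - 1))`, so for large `|ξ|` it costs at most half of this bound. -/

open MvPolynomial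

theorem closedSector_eq_setOf_cos_le {ψ : ℝ} (h0 : 0 ≤ ψ) (hπ : ψ ≤ Real.pi) :
    closedSector ψ = {z : ℂ | ‖z‖ * Real.cos ψ ≤ z.re} := by
  ext z
  rcases eq_or_ne z 0 with rfl | hz
  · simp [closedSector]
  have hpos : 0 < ‖z‖ := norm_pos_iff.mpr hz
  simp only [closedSector, Set.mem_union, Set.mem_ofPred_eq, Set.mem_singleton_iff, hz, or_false]
  rw [← Complex.norm_mul_cos_arg z, ← Real.cos_abs z.arg, mul_le_mul_iff_right₀ hpos]
  exact (Real.strictAntiOn_cos.le_iff_ge ⟨h0, hπ⟩ ⟨abs_nonneg _, Complex.abs_arg_le_pi z⟩).symm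

theorem isClosed_closedSector {ψ : ℝ} (h0 : 0 ≤ ψ) (hπ : ψ ≤ Real.pi) :
    IsClosed (closedSector ψ) := by
  rw [closedSector_eq_setOf_cos_le h0 hπ]
  exact isClosed_le (by fun_prop) Complex.continuous_re

theorem smul_mem_closedSector {ψ t : ℝ} {z : ℂ} (ht : 0 < t) (hz : z ∈ closedSector ψ) :
    t • z ∈ closedSector ψ := by
  rw [Complex.real_smul]
  rcases hz with hz | rfl
  · left
    simpa [Complex.arg_real_mul z ht] using hz
  · simp [closedSector]

theorem MvPolynomial.IsHomogeneous.eval_mul_left {σ R : Type*} [CommSemiring R]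
    {p : MvPolynomial σ R} {m : ℕ} (hp : p.IsHomogeneous m) (c : R) (x : σ → R) :
    eval (fun i => c * x i) p = c ^ m * eval x p := by
  rw [eval_eq, eval_eq, Finset.mul_sum]
  refine Finset.sum_congr rfl fun d hd => ?_
  have hdeg : d.degree = m := by
    rw [Finsupp.degree_eq_weight_one]
    exact hp (mem_support_iff.mp hd)
  rw [Finsupp.degree_apply] at hdeg
  simp only [mul_pow, Finset.prod_mul_distrib, Finset.prod_pow_eq_pow_sum, hdeg]
  ring

theorem MvPolynomial.norm_eval_le_of_totalDegree_le {σ 𝕜 : Type*} [NormedField 𝕜]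
    {p : MvPolynomial σ 𝕜} {D : ℕ} (hp : p.totalDegree ≤ D) {x : σ → 𝕜} {M : ℝ}
    (hM : 1 ≤ M) (hx : ∀ i, ‖x i‖ ≤ M) :
    ‖eval x p‖ ≤ (∑ d ∈ p.support, ‖p.coeff d‖) * M ^ D := by
  rw [eval_eq, Finset.sum_mul]
  refine (norm_sum_le _ _).trans (Finset.sum_le_sum fun d hd => ?_)
  rw [norm_mul]
  gcongr
  calc ‖∏ i ∈ d.support, x i ^ d i‖
      ≤ ∏ i ∈ d.support, M ^ d i := by
        rw [norm_prod]
        gcongr with i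
        rw [norm_pow]
        exact pow_le_pow_left₀ (norm_nonneg _) (hx i) _
    _ = M ^ d.degree := by rw [Finset.prod_pow_eq_pow_sum]; rfl
    _ ≤ M ^ D := pow_le_pow_right₀ hM ((le_totalDegree hd).trans hp)

theorem MvPolynomial.totalDegree_sub_homogeneousComponent_le {σ R : Type*} [CommRing R]
    (p : MvPolynomial σ R) :
    (p - homogeneousComponent p.totalDegree p).totalDegree ≤ p.totalDegree - 1 := by
  refine Finset.sup_le fun d hd => ?_
  rw [mem_support_iff, coeff_sub, coeff_homogeneousComponent] at hd
  have hdeg : d.degree ≠ p.totalDegree := fun h => hd (by simp [h])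
  have hd' : d ∈ p.support := mem_support_iff.mpr fun h => hd (by simp [h])
  have hle : d.degree ≤ p.totalDegree := le_totalDegree hd'
  change d.degree ≤ _
  omega

section QuasiHomogeneous

variable {E F : Type*} [NormedAddCommGroup E] [ProperSpace E] [NormedAddCommGroup F] [ProperSpace F]

theorem isCompact_setOf_norm_add_norm_pow_eq_one {m : ℕ} (hm : m ≠ 0) :
    IsCompact {p : E × F | ‖p.1‖ + ‖p.2‖ ^ m = 1} := by
  refine ((isCompact_closedBall (0 : E) 1).prod (isCompact_closedBall (0 : F) 1))
    |>.of_isClosed_subset (isClosed_eq (by fun_prop) continuous_const) ?_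
  rintro ⟨z, ξ⟩ (h : ‖z‖ + ‖ξ‖ ^ m = 1)
  have hξ : ‖ξ‖ ^ m ≤ 1 := by linarith [norm_nonneg z]
  refine ⟨?_, ?_⟩
  · simpa using (by linarith [pow_nonneg (norm_nonneg ξ) m] : ‖z‖ ≤ 1)
  · simpa using (pow_le_one_iff_of_nonneg (norm_nonneg ξ) hm).mp hξ

variable [NormedSpace ℝ E] [NormedSpace ℝ F]

theorem exists_pos_mul_le_of_quasiHomogeneous {S : Set E} (hS : IsClosed S)
    (hcone : ∀ z ∈ S, ∀ t : ℝ, 0 < t → t • z ∈ S) {m : ℕ} (hm : m ≠ 0) {f : E × F → ℝ}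
    (hf : Continuous f) (hhom : ∀ t : ℝ, 0 < t → ∀ z ξ, f (t ^ m • z, t • ξ) = t ^ m * f (z, ξ))
    (hpos : ∀ z ∈ S, ∀ ξ, (z, ξ) ≠ 0 → 0 < f (z, ξ)) :
    ∃ c > 0, ∀ z ∈ S, ∀ ξ, c * (‖z‖ + ‖ξ‖ ^ m) ≤ f (z, ξ) := by
  set K := {p : E × F | ‖p.1‖ + ‖p.2‖ ^ m = 1} ∩ Prod.fst ⁻¹' S
  have hK : IsCompact K :=
    (isCompact_setOf_norm_add_norm_pow_eq_one hm).inter_right (hS.preimage continuous_fst)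
  obtain ⟨c, hc, hcK⟩ := hK.exists_forall_le' hf.continuousOn (a := 0) fun p hp =>
    hpos p.1 hp.2 p.2 fun h0 => by
      rw [Prod.mk.eta] at h0
      simp [K, h0, hm] at hp
  refine ⟨c, hc, fun z hz ξ => ?_⟩
  set s := ‖z‖ + ‖ξ‖ ^ m
  rcases (by positivity : 0 ≤ s).eq_or_lt with hs | hs
  · have hz : ‖z‖ = 0 := by linarith [norm_nonneg z, pow_nonneg (norm_nonneg ξ) m]
    have hξ : ‖ξ‖ ^ m = 0 := by linarith [norm_nonneg z, pow_nonneg (norm_nonneg ξ) m]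
    rw [norm_eq_zero] at hz
    rw [pow_eq_zero_iff hm, norm_eq_zero] at hξ
    -- `f (0, 0) = 2 ^ m * f (0, 0)` forces `f (0, 0) = 0`.
    have h0 := hhom 2 two_pos 0 0
    simp only [smul_zero] at h0
    have h2 : (1 : ℝ) < 2 ^ m := one_lt_pow₀ one_lt_two hm
    rw [← hs, mul_zero, hz, hξ]
    nlinarith
  set t := (s ^ (m⁻¹ : ℝ))⁻¹
  have ht : 0 < t := by positivity
  have htm : t ^ m * s = 1 := by
    rw [inv_pow, Real.rpow_inv_natCast_pow hs.le hm, inv_mul_cancel₀ hs.ne']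
  have hmem : (t ^ m • z, t • ξ) ∈ K := by
    refine ⟨?_, hcone z hz _ (by positivity)⟩
    change ‖t ^ m • z‖ + ‖t • ξ‖ ^ m = 1
    rw [norm_smul, norm_smul, Real.norm_of_nonneg (by positivity), Real.norm_of_nonneg ht.le,
      mul_pow, ← mul_add, htm]
  calc c * s ≤ t ^ m * f (z, ξ) * s := by gcongr; rw [← hhom t ht]; exact hcK _ hmem
    _ = f (z, ξ) := by rw [mul_right_comm, htm, one_mul]

end QuasiHomogeneous

theorem MvPolynomial.IsHomogeneous.exists_pos_mul_le_norm_add_eval {n m : ℕ}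
    {p : MvPolynomial (Fin n) ℂ} (hp : p.IsHomogeneous m) (hm : m ≠ 0) {S : Set ℂ}
    (hS : IsClosed S) (hcone : ∀ z ∈ S, ∀ t : ℝ, 0 < t → t • z ∈ S)
    (hne : ∀ z ∈ S, ∀ ξ : EuclideanSpace ℝ (Fin n), ¬(z = 0 ∧ ξ = 0) →
      z + eval (fun i => (ξ i : ℂ)) p ≠ 0) :
    ∃ c > 0, ∀ z ∈ S, ∀ ξ : EuclideanSpace ℝ (Fin n),
      c * (‖z‖ + ‖ξ‖ ^ m) ≤ ‖z + eval (fun i => (ξ i : ℂ)) p‖ := by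
  refine exists_pos_mul_le_of_quasiHomogeneous
    (f := fun w : ℂ × EuclideanSpace ℝ (Fin n) => ‖w.1 + eval (fun i => (w.2 i : ℂ)) p‖) hS hcone hm
    (by have := p.continuous_eval; fun_prop) (fun t ht z ξ => ?_)
    fun z hz ξ h0 => norm_pos_iff.mpr (hne z hz ξ fun h => h0 (by simp [h.1, h.2]))
  have hscale : (fun i => ((t • ξ) i : ℂ)) = fun i => (t : ℂ) * (ξ i : ℂ) := by
    ext i; simp
  rw [hscale, hp.eval_mul_left, Complex.real_smul, Complex.ofReal_pow, ← mul_add, norm_mul,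
    norm_pow, Complex.norm_real, Real.norm_of_nonneg ht.le]

theorem MvPolynomial.exists_norm_eval_le_mul_norm_pow {n m : ℕ} {q : MvPolynomial (Fin n) ℂ}
    (hq : q.totalDegree < m) {ε : ℝ} (hε : 0 < ε) :
    ∃ R > 0, ∀ ξ : EuclideanSpace ℝ (Fin n), R ≤ ‖ξ‖ →
      ‖eval (fun i => (ξ i : ℂ)) q‖ ≤ ε * ‖ξ‖ ^ m := by
  set K := ∑ d ∈ q.support, ‖q.coeff d‖
  refine ⟨max 1 (K / ε), by positivity, fun ξ hξ => ?_⟩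
  have h1 : 1 ≤ ‖ξ‖ := (le_max_left _ _).trans hξ
  have hK : K ≤ ε * ‖ξ‖ := (div_le_iff₀' hε).mp ((le_max_right _ _).trans hξ)
  calc ‖eval (fun i => (ξ i : ℂ)) q‖ ≤ K * ‖ξ‖ ^ (m - 1) :=
        norm_eval_le_of_totalDegree_le (Nat.le_sub_one_of_lt hq) h1 fun i => by
          simpa using PiLp.norm_apply_le ξ i
    _ ≤ ε * ‖ξ‖ * ‖ξ‖ ^ (m - 1) := by gcongr
    _ = ε * ‖ξ‖ ^ m := by rw [mul_assoc, ← pow_succ', Nat.sub_add_cancel (by omega)]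

/-- Parameter-elliptic lower bound: `|λ| + |ξ|^m ≤ C |λ + P(ξ)|` for `|ξ| ≥ R`. -/
theorem paramElliptic_lower_bound {n : ℕ} (P : MvPolynomial (Fin n) ℂ)
    (hdeg : 1 ≤ P.totalDegree) (φ : ℝ) (hφ : φ ∈ Set.Ioo 0 Real.pi)
    (hP : IsParamElliptic P φ) :
    ∃ C : ℝ, 0 < C ∧ ∃ R : ℝ, 0 < R ∧
      ∀ z ∈ closedSector (Real.pi - φ), ∀ ξ : EuclideanSpace ℝ (Fin n), R ≤ ‖ξ‖ →
        ‖z‖ + ‖ξ‖ ^ P.totalDegree ≤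
          C * ‖z + MvPolynomial.eval (fun i => (ξ i : ℂ)) P‖ := by
  obtain ⟨hφ0, hφπ⟩ := hφ
  set m := P.totalDegree
  set Pm := homogeneousComponent m P
  obtain ⟨c, hc, hPm⟩ := (homogeneousComponent_isHomogeneous m P).exists_pos_mul_le_norm_add_eval
    (by omega) (isClosed_closedSector (by linarith) (by linarith))
    (fun z hz t ht => smul_mem_closedSector ht hz) hP
  obtain ⟨R, hR, hlow⟩ := exists_norm_eval_le_mul_norm_pow (m := m)
    ((totalDegree_sub_homogeneousComponent_le P).trans_lt (by omega)) (half_pos hc)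
  refine ⟨2 / c, by positivity, R, hR, fun z hz ξ hξ => ?_⟩
  set x : Fin n → ℂ := fun i => (ξ i : ℂ)
  have key : c * (‖z‖ + ‖ξ‖ ^ m) ≤ ‖z + eval x P‖ + c / 2 * ‖ξ‖ ^ m :=
    calc c * (‖z‖ + ‖ξ‖ ^ m) ≤ ‖z + eval x Pm‖ := hPm z hz ξ
      _ = ‖(z + eval x P) - eval x (P - Pm)‖ := by rw [map_sub]; congr 1; ring
      _ ≤ ‖z + eval x P‖ + ‖eval x (P - Pm)‖ := norm_sub_le _ _
      _ ≤ ‖z + eval x P‖ + c / 2 * ‖ξ‖ ^ m := by gcongr; exact hlow ξ hξ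
  rw [div_mul_eq_mul_div, le_div_iff₀ hc]
  linarith [mul_nonneg hc.le (norm_nonneg z)]
end

section
/- Sector mapping property for homogeneous parameter-elliptic polynomials: Let P be a homogeneous polynomial of degree m ≥ 1 in n variables with complex coefficients, and let φ_P, φ_V ∈ [0,π) with φ_P + φ_V < π. Assume that for every φ ∈ (φ_P, π) one has λ + P(ξ) ≠ 0 for all λ ∈ Σ̄_{π−φ} and all ξ ∈ ℝⁿ with (λ, ξ) ≠ (0, 0). Then for every φ₀ with max{φ_P, φ_V} < φ₀ < π there exists φ > φ_V such that λ + P(ξ) ∈ Σ_{π−φ} for all ξ ∈ ℝⁿ and all λ ∈ Σ_{π−φ₀}. -/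
open scoped BigOperators

/-- The open sector `Σ_φ = {λ ∈ ℂ \ {0} : |arg λ| < φ}`. -/
def openSector (φ : ℝ) : Set ℂ := {z : ℂ | z ≠ 0 ∧ |z.arg| < φ}

/-! Ellipticity at angle `θ` says exactly that `-P(ξ)` avoids `Σ̄_{π-θ}`, i.e. that `P(ξ) ∈ Σ_θ`
(or `P(ξ) = 0`). Picking `φP < θ < φ₀`, the sum of `λ ∈ Σ_{π-φ₀}` and `P(ξ) ∈ Σ_θ` lies in
`Σ_{max (π-φ₀) θ}`, because two sectors whose half-angles add up to less than `π` sum into the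
larger one. For half-angles `≤ π/2` this is convexity, read off from the description
`Σ̄_s = {z : ‖z‖ cos s ≤ Re z}`; the remaining case is reduced to it through `z ∈ Σ_s ↔ -z ∉ Σ̄_{π-s}`.
-/

open Real

section Sectors

variable {s t : ℝ} {a b z : ℂ}

theorem openSector_mono (hst : s ≤ t) : openSector s ⊆ openSector t :=
  fun _ ⟨hz, harg⟩ => ⟨hz, harg.trans_le hst⟩

theorem openSector_subset_closedSector (hst : s ≤ t) : openSector s ⊆ closedSector t :=
  fun _ ⟨_, harg⟩ => Or.inl (harg.le.trans hst)

theorem pos_of_mem_openSector (hz : z ∈ openSector s) : 0 < s :=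
  (abs_nonneg _).trans_lt hz.2

theorem mem_closedSector_iff (hs : s ∈ Set.Icc 0 π) :
    z ∈ closedSector s ↔ ‖z‖ * cos s ≤ z.re := by
  rcases eq_or_ne z 0 with rfl | hz
  · simp [closedSector]
  have harg : |z.arg| ∈ Set.Icc 0 π := ⟨abs_nonneg _, Complex.abs_arg_le_pi z⟩
  rw [closedSector, Set.mem_union, Set.mem_ofPred_eq, Set.mem_singleton_iff, or_iff_left hz,
    ← strictAntiOn_cos.le_iff_ge hs harg, cos_abs, Complex.cos_arg hz,
    le_div_iff₀ (norm_pos_iff.2 hz), mul_comm]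

theorem mem_openSector_iff (hs : s ∈ Set.Icc 0 π) :
    z ∈ openSector s ↔ ‖z‖ * cos s < z.re := by
  rcases eq_or_ne z 0 with rfl | hz
  · simp [openSector]
  have harg : |z.arg| ∈ Set.Icc 0 π := ⟨abs_nonneg _, Complex.abs_arg_le_pi z⟩
  rw [openSector, Set.mem_ofPred_eq, and_iff_right hz,
    ← strictAntiOn_cos.lt_iff_gt hs harg, cos_abs, Complex.cos_arg hz,
    lt_div_iff₀ (norm_pos_iff.2 hz), mul_comm]

theorem mem_openSector_iff_neg_notMem_closedSector (hs : s ∈ Set.Icc 0 π) :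
    z ∈ openSector s ↔ -z ∉ closedSector (π - s) := by
  have hs' : π - s ∈ Set.Icc 0 π := ⟨by linarith [hs.2], by linarith [hs.1]⟩
  rw [mem_openSector_iff hs, mem_closedSector_iff hs', norm_neg, cos_pi_sub, Complex.neg_re]
  constructor <;> intro h <;> linarith

theorem add_mem_closedSector (hs : s ∈ Set.Icc 0 (π / 2))
    (ha : a ∈ closedSector s) (hb : b ∈ closedSector s) : a + b ∈ closedSector s := by
  have hs' : s ∈ Set.Icc 0 π := ⟨hs.1, hs.2.trans (by linarith [pi_pos])⟩
  have hcos : 0 ≤ cos s := cos_nonneg_of_mem_Icc ⟨by linarith [pi_pos, hs.1], hs.2⟩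
  rw [mem_closedSector_iff hs'] at ha hb ⊢
  calc ‖a + b‖ * cos s ≤ (‖a‖ + ‖b‖) * cos s := by gcongr; exact norm_add_le a b
    _ ≤ (a + b).re := by rw [Complex.add_re]; linarith

theorem add_mem_openSector (hs : s ≤ π / 2)
    (ha : a ∈ openSector s) (hb : b ∈ openSector s) : a + b ∈ openSector s := by
  have hs' : s ∈ Set.Icc 0 π := ⟨(pos_of_mem_openSector ha).le, hs.trans (by linarith [pi_pos])⟩
  have hcos : 0 ≤ cos s := cos_nonneg_of_mem_Icc ⟨by linarith [pi_pos, hs'.1], hs⟩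
  rw [mem_openSector_iff hs'] at ha hb ⊢
  calc ‖a + b‖ * cos s ≤ (‖a‖ + ‖b‖) * cos s := by gcongr; exact norm_add_le a b
    _ < (a + b).re := by rw [Complex.add_re]; linarith

theorem add_mem_openSector_of_le (hts : t ≤ s) (hst : s + t < π)
    (ha : a ∈ openSector s) (hb : b ∈ openSector t) : a + b ∈ openSector s := by
  rcases le_or_gt s (π / 2) with hs | hs
  · exact add_mem_openSector hs ha (openSector_mono hts hb)
  have ht := pos_of_mem_openSector hb
  have hs' : s ∈ Set.Icc 0 π := ⟨by linarith, by linarith⟩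
  rw [mem_openSector_iff_neg_notMem_closedSector hs'] at ha ⊢
  intro hab
  have hb' : b ∈ closedSector (π - s) := openSector_subset_closedSector (by linarith) hb
  refine ha ?_
  simpa using add_mem_closedSector ⟨by linarith, by linarith⟩ hab hb'

theorem add_mem_openSector_max (hst : s + t < π)
    (ha : a ∈ openSector s) (hb : b ∈ openSector t) : a + b ∈ openSector (max s t) := by
  rcases le_total t s with h | h
  · rw [max_eq_left h]
    exact add_mem_openSector_of_le h hst ha hb
  · rw [max_eq_right h, add_comm]
    exact add_mem_openSector_of_le h (by linarith) hb ha

end Sectors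

theorem sector_mapping_of_homogeneous_general {n : ℕ} (P : MvPolynomial (Fin n) ℂ)
    (φP φV : ℝ)
    (hφP : φP ∈ Set.Ico 0 Real.pi)
    (hsum : φP + φV < Real.pi)
    (hPell : ∀ φ ∈ Set.Ioo φP Real.pi, ∀ z ∈ closedSector (Real.pi - φ),
      ∀ ξ : EuclideanSpace ℝ (Fin n), ¬(z = 0 ∧ ξ = 0) →
        z + MvPolynomial.eval (fun i => (ξ i : ℂ)) P ≠ 0) :
    ∀ φ₀ : ℝ, max φP φV < φ₀ → φ₀ < Real.pi →
      ∃ φ : ℝ, φV < φ ∧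
        ∀ ξ : EuclideanSpace ℝ (Fin n), ∀ z ∈ openSector (Real.pi - φ₀),
          z + MvPolynomial.eval (fun i => (ξ i : ℂ)) P ∈ openSector (Real.pi - φ) := by
  intro φ₀ hφ₀ hφ₀π
  obtain ⟨hφPφ₀, hφVφ₀⟩ := max_lt_iff.1 hφ₀
  obtain ⟨θ, hφPθ, hθ⟩ := exists_between (lt_min hφPφ₀ (by linarith : φP < π - φV))
  obtain ⟨hθφ₀, hθφV⟩ := lt_min_iff.1 hθ
  refine ⟨min φ₀ (π - θ), lt_min hφVφ₀ (by linarith), fun ξ z hz => ?_⟩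
  have hφ : π - min φ₀ (π - θ) = max (π - φ₀) θ := by
    rw [← max_sub_sub_left, sub_sub_cancel]
  set w := MvPolynomial.eval (fun i => (ξ i : ℂ)) P
  rw [hφ]
  rcases eq_or_ne w 0 with hw | hw
  · rw [hw, add_zero]
    exact openSector_mono (le_max_left _ _) hz
  have hwθ : w ∈ openSector θ :=
    (mem_openSector_iff_neg_notMem_closedSector ⟨by linarith [hφP.1], by linarith⟩).2 fun hneg =>
      hPell θ ⟨hφPθ, by linarith⟩ (-w) hneg ξ (fun h => hw (neg_eq_zero.1 h.1)) (neg_add_cancel w)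
  exact add_mem_openSector_max (by linarith) hz hwθ

/-- Sector mapping property for homogeneous parameter-elliptic polynomials. -/
theorem sector_mapping_of_homogeneous {n m : ℕ} (P : MvPolynomial (Fin n) ℂ)
    (hm : 1 ≤ m) (hhom : P.IsHomogeneous m) (φP φV : ℝ)
    (hφP : φP ∈ Set.Ico 0 Real.pi) (hφV : φV ∈ Set.Ico 0 Real.pi)
    (hsum : φP + φV < Real.pi)
    (hPell : ∀ φ ∈ Set.Ioo φP Real.pi, ∀ z ∈ closedSector (Real.pi - φ),
      ∀ ξ : EuclideanSpace ℝ (Fin n), ¬(z = 0 ∧ ξ = 0) →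
        z + MvPolynomial.eval (fun i => (ξ i : ℂ)) P ≠ 0) :
    ∀ φ₀ : ℝ, max φP φV < φ₀ → φ₀ < Real.pi →
      ∃ φ : ℝ, φV < φ ∧
        ∀ ξ : EuclideanSpace ℝ (Fin n), ∀ z ∈ openSector (Real.pi - φ₀),
          z + MvPolynomial.eval (fun i => (ξ i : ℂ)) P ∈ openSector (Real.pi - φ) :=
  sector_mapping_of_homogeneous_general P φP φV hφP hsum hPell
end
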